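/- arXiv:2503.12000 — 9 statements merged into one kernel-verified Lean document; each statement's English description precedes it below -/
import Mathlib

section
/- Let P be a non-commutative Poisson algebra over K whose associative product is a domain, and let z ∈ P. If u ∈ F^k(z,λ) \ F^{k-1}(z,λ) and w ∈ F^l(z,μ) \ F^{l-1}(z,μ), then uw ∈ F^{k+l}(z,λ+μ) \ F^{k+l-1}(z,λ+μ). -/
/-!
The shifted operators `ad_z - λ` and `ad_z - μ` satisfy a twisted Leibniz rule
`(ad_z - (λ + μ))(xy) = (ad_z - λ)(x) y + x (ad_z - μ)(y)`, so the binomial expansion of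
`(ad_z - (λ + μ))^n (uw)` holds. For `n = k + l + 1` every term vanishes, while for `n = k + l`
only `binom(k+l, k) (ad_z - λ)^k(u) (ad_z - μ)^l(w)` survives, which is nonzero because
`P` is a domain and `K` has characteristic zero.
-/

/-- A (possibly non-commutative) Poisson algebra structure on an associative
unital `K`-algebra `P`: a `K`-bilinear Lie bracket satisfying the Leibniz rule. -/
structure PoissonBracket (K P : Type*) [CommRing K] [Ring P] [Algebra K P] where
  bracket : P →ₗ[K] P →ₗ[K] P
  antisymm : ∀ x y : P, bracket x y = - bracket y x
  jacobi : ∀ x y z : P,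
    bracket x (bracket y z) = bracket (bracket x y) z + bracket y (bracket x z)
  leibniz : ∀ x y z : P, bracket x (y * z) = bracket x y * z + y * bracket x z

open Finset

section Leibniz

variable {R A : Type*} [CommRing R] [Ring A] [Algebra R A]

theorem sub_smul_one_apply_mul_of_leibniz {D : Module.End R A}
    (hD : ∀ x y, D (x * y) = D x * y + x * D y) (a b : R) (x y : A) :
    (D - (a + b) • (1 : Module.End R A)) (x * y) =
      (D - a • (1 : Module.End R A)) x * y + x * (D - b • (1 : Module.End R A)) y := by
  simp only [LinearMap.sub_apply, LinearMap.add_apply, LinearMap.smul_apply, Module.End.one_apply,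
    hD, add_smul, sub_mul, mul_sub, smul_mul_assoc, mul_smul_comm]
  abel

theorem pow_apply_mul_of_twisted_leibniz {E F G : Module.End R A}
    (h : ∀ x y, E (x * y) = F x * y + x * G y) (x y : A) (n : ℕ) :
    (E ^ n) (x * y) = ∑ ij ∈ antidiagonal n, n.choose ij.1 • ((F ^ ij.1) x * (G ^ ij.2) y) := by
  induction n with
  | zero => simp
  | succ n ih =>
    rw [sum_antidiagonal_choose_succ_nsmul (fun i j ↦ (F ^ i) x * (G ^ j) y) n]
    simp only [pow_succ', Module.End.mul_apply, ih, map_sum, map_nsmul, h, nsmul_add,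
      sum_add_distrib]
    rw [add_comm, add_left_cancel_iff]
    refine sum_congr rfl fun ⟨i, j⟩ hij ↦ ?_
    rw [Nat.choose_symm_of_eq_add (HasAntidiagonal.mem_antidiagonal.1 hij).symm]

end Leibniz

/-- In a Poisson algebra whose product is a domain, if `u ∈ F^k(z,λ) \ F^{k-1}(z,λ)`
and `w ∈ F^l(z,μ) \ F^{l-1}(z,μ)`, then `uw ∈ F^{k+l}(z,λ+μ) \ F^{k+l-1}(z,λ+μ)`. -/
theorem stmt_3 {K P : Type*} [Field K] [CharZero K] [Ring P] [Algebra K P]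
    [NoZeroDivisors P]
    (B : PoissonBracket K P) (z : P) (lam mu : K) (k l : ℕ) (u w : P)
    (hu : ((B.bracket z - lam • (1 : Module.End K P)) ^ (k + 1)) u = 0)
    (hu' : ((B.bracket z - lam • (1 : Module.End K P)) ^ k) u ≠ 0)
    (hw : ((B.bracket z - mu • (1 : Module.End K P)) ^ (l + 1)) w = 0)
    (hw' : ((B.bracket z - mu • (1 : Module.End K P)) ^ l) w ≠ 0) :
    ((B.bracket z - (lam + mu) • (1 : Module.End K P)) ^ (k + l + 1)) (u * w) = 0 ∧
      ((B.bracket z - (lam + mu) • (1 : Module.End K P)) ^ (k + l)) (u * w) ≠ 0 := by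
  have expand := pow_apply_mul_of_twisted_leibniz
    (sub_smul_one_apply_mul_of_leibniz (B.leibniz z) lam mu) u w
  have term_eq_zero : ∀ i j, (k < i ∨ l < j) →
      ((B.bracket z - lam • (1 : Module.End K P)) ^ i) u *
        ((B.bracket z - mu • (1 : Module.End K P)) ^ j) w = 0 := by
    rintro i j (hi | hj)
    · rw [Module.End.pow_map_zero_of_le hi hu, zero_mul]
    · rw [Module.End.pow_map_zero_of_le hj hw, mul_zero]
  refine ⟨?_, ?_⟩
  · rw [expand]
    refine sum_eq_zero fun ⟨i, j⟩ hij ↦ ?_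
    rw [term_eq_zero i j (by rw [HasAntidiagonal.mem_antidiagonal] at hij; omega), smul_zero]
  · rw [expand, sum_eq_single_of_mem (k, l) (HasAntidiagonal.mem_antidiagonal.2 rfl),
      ← Nat.cast_smul_eq_nsmul K]
    · exact smul_ne_zero (Nat.cast_ne_zero.2 (Nat.choose_pos (Nat.le_add_right k l)).ne')
        (mul_ne_zero hu' hw')
    · rintro ⟨i, j⟩ hij hne
      rw [HasAntidiagonal.mem_antidiagonal] at hij
      rw [term_eq_zero i j (by grind), smul_zero]
end

section
/- Let A be a K-algebra that is a domain with finite Gelfand–Kirillov dimension, and let B be a subalgebra of A. If there exists z ∈ A that is right algebraically independent over B (i.e., f(z) ≠ 0 for every nonzero polynomial f(X) = Σ b_i X^i with coefficients b_i ∈ B, where f(z) = Σ b_i z^i), then GKdim(A) ≥ GKdim(B) + 1. -/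
open scoped ENNReal

/-- The Gelfand–Kirillov dimension of a `K`-algebra `A`: the supremum over all
finite-dimensional subspaces `V` containing `1` of
`limsup_n log(dim V^n) / log n`. -/
noncomputable def gkDim (K A : Type*) [Field K] [Ring A] [Algebra K A] : ℝ≥0∞ :=
  ⨆ (V : Submodule K A) (_ : (1 : A) ∈ V) (_ : FiniteDimensional K V),
    Filter.limsup
      (fun n : ℕ =>
        ENNReal.ofReal (Real.log (Module.finrank K ↥(V ^ n)) / Real.log n))
      Filter.atTop

open Filter Module

section auxalg
variable {K A : Type*} [Field K] [Ring A] [Algebra K A]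

/-- powers of a submodule containing 1 are increasing -/
lemma gk_pow_le_pow_of_one_mem (U : Submodule K A) (hU : (1 : A) ∈ U) {k m : ℕ} (h : k ≤ m) :
    U ^ k ≤ U ^ m := by
  obtain ⟨d, rfl⟩ := Nat.exists_eq_add_of_le h
  clear h
  induction d with
  | zero => simp
  | succ d ih =>
    refine le_trans ih ?_
    rw [← Nat.add_assoc, pow_succ]
    intro x hx
    simpa using Submodule.mul_mem_mul hx hU

lemma gk_pow_le_of_le_subalgebra (B : Subalgebra K A) (W : Submodule K A)
    (hWB : W ≤ Subalgebra.toSubmodule B) (n : ℕ) :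
    W ^ n ≤ Subalgebra.toSubmodule B := by
  induction n with
  | zero => simpa [Submodule.one_le] using B.one_mem
  | succ n ih =>
    rw [pow_succ]
    exact le_trans (mul_le_mul' ih hWB)
      (Submodule.mul_le.2 fun x hx y hy => B.mul_mem hx hy)

lemma gk_pow_mono_left {W U : Submodule K A} (h : W ≤ U) (n : ℕ) : W ^ n ≤ U ^ n := by
  induction n with
  | zero => simp
  | succ n ih => rw [pow_succ, pow_succ]; exact mul_le_mul' ih h

/-- Key dimension bound: if `z` is right algebraically independent over `B` and
`W ≤ B` is a finite-dimensional subspace containing `1`, then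
`(n+1) * dim W^n ≤ dim (W ⊔ Kz)^(2n+1)`. -/
lemma gk_key_bound (B : Subalgebra K A) (z : A)
    (hz : ∀ (n : ℕ) (b : ℕ → A), (∀ i, b i ∈ B) → (∃ i, i ≤ n ∧ b i ≠ 0) →
      ∑ i ∈ Finset.range (n + 1), b i * z ^ i ≠ 0)
    (W : Submodule K A) (hWB : W ≤ Subalgebra.toSubmodule B) (h1W : (1 : A) ∈ W)
    [FiniteDimensional K W] (n : ℕ) :
    (n + 1) * finrank K ↥(W ^ n) ≤
      finrank K ↥((W ⊔ Submodule.span K {z}) ^ (2 * n + 1)) := by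
  set U := W ⊔ Submodule.span K {z} with hUdef
  have hWfg : W.FG := (Submodule.fg_iff_finiteDimensional W).2 ‹_›
  have hWn : FiniteDimensional K ↥(W ^ n) :=
    (Submodule.fg_iff_finiteDimensional _).1 (hWfg.pow n)
  have hUfg : U.FG := hWfg.sup (Submodule.fg_span_singleton z)
  have hUm : FiniteDimensional K ↥(U ^ (2 * n + 1)) :=
    (Submodule.fg_iff_finiteDimensional _).1 (hUfg.pow _)
  -- the linear map (w_0,...,w_n) ↦ ∑ w_i z^i
  set F : (Fin (n + 1) → ↥(W ^ n)) →ₗ[K] A :=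
    ∑ i : Fin (n + 1), (LinearMap.mulRight K (z ^ (i : ℕ))).comp
      (((W ^ n).subtype).comp (LinearMap.proj i)) with hF
  have hFapp : ∀ w, F w = ∑ i : Fin (n + 1), (w i : A) * z ^ (i : ℕ) := by
    intro w; simp [hF, LinearMap.sum_apply]
  have hinj : Function.Injective F := by
    rw [← LinearMap.ker_eq_bot, LinearMap.ker_eq_bot']
    intro w hw
    by_contra hne
    have : ∃ i : Fin (n + 1), w i ≠ 0 := by
      by_contra h
      push_neg at h
      exact hne (funext h)
    obtain ⟨i0, hi0⟩ := this
    set b : ℕ → A := fun j => if h : j < n + 1 then ((w ⟨j, h⟩ : A)) else 0 with hb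
    have hbB : ∀ i, b i ∈ B := by
      intro j
      by_cases h : j < n + 1
      · simpa [hb, h, Nat.lt_succ_iff.mp h] using gk_pow_le_of_le_subalgebra B W hWB n (w ⟨j, h⟩).2
      · simp [hb, h, B.zero_mem, show ¬ j ≤ n by omega]
    have hbne : ∃ i, i ≤ n ∧ b i ≠ 0 := by
      refine ⟨i0, Nat.lt_succ_iff.mp i0.2, ?_⟩
      simp only [hb, i0.2, dif_pos]
      intro h
      apply hi0
      exact Subtype.ext (by simpa using h)
    apply hz n b hbB hbne
    have : ∑ i ∈ Finset.range (n + 1), b i * z ^ i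
        = ∑ i : Fin (n + 1), (w i : A) * z ^ (i : ℕ) := by
      rw [← Fin.sum_univ_eq_sum_range]
      refine Finset.sum_congr rfl fun i _ => ?_
      simp [hb, i.2, Nat.lt_succ_iff.mp i.2]
    rw [this, ← hFapp w, hw]
  have hrange : ∀ w, F w ∈ U ^ (2 * n + 1) := by
    intro w
    rw [hFapp]
    refine Submodule.sum_mem _ fun i _ => ?_
    have h1 : (w i : A) ∈ U ^ n := gk_pow_mono_left le_sup_left n (w i).2
    have h2 : z ^ (i : ℕ) ∈ U ^ (i : ℕ) :=
      Submodule.pow_mem_pow _ (Submodule.mem_sup_right (Submodule.mem_span_singleton_self z)) _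
    have h3 : (w i : A) * z ^ (i : ℕ) ∈ U ^ (n + (i : ℕ)) := by
      rw [pow_add]; exact Submodule.mul_mem_mul h1 h2
    have hle : n + (i : ℕ) ≤ 2 * n + 1 := by omega
    exact gk_pow_le_pow_of_one_mem U (Submodule.mem_sup_left h1W) hle h3
  have hdim : finrank K (Fin (n + 1) → ↥(W ^ n)) = (n + 1) * finrank K ↥(W ^ n) := by
    rw [Module.finrank_pi_fintype, Finset.sum_const, Finset.card_univ, Fintype.card_fin,
      smul_eq_mul]
  calc (n + 1) * finrank K ↥(W ^ n) = finrank K (Fin (n + 1) → ↥(W ^ n)) := hdim.symm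
    _ ≤ finrank K ↥(U ^ (2 * n + 1)) := by
        refine LinearMap.finrank_le_finrank_of_injective
          (f := F.codRestrict (U ^ (2 * n + 1)) hrange) ?_
        rw [← LinearMap.ker_eq_bot, LinearMap.ker_codRestrict]
        exact LinearMap.ker_eq_bot.2 hinj

end auxalg

lemma gk_ennreal_limsup_add_const (u : ℕ → ℝ≥0∞) (c : ℝ≥0∞) :
    limsup (fun n => u n + c) atTop = limsup u atTop + c := by
  refine limsup_add_const atTop u c ?_ ?_
  · exact ⟨⊤, by simp⟩
  · exact isCoboundedUnder_le_of_le atTop (x := 0) (fun n => zero_le)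

lemma gk_limsup_subseq_le (b : ℕ → ℝ≥0∞) (u : ℕ → ℕ) (hu : Tendsto u atTop atTop) :
    limsup (fun n => b (u n)) atTop ≤ limsup b atTop := by
  have : (fun n => b (u n)) = b ∘ u := rfl
  rw [this, Filter.limsup, Filter.limsup, ← Filter.map_map]
  exact limsSup_le_limsSup_of_le (map_mono hu)

/-- The key analytic step. -/
lemma gk_limsup_aux (d e : ℕ → ℕ) (hd : ∀ n, 1 ≤ d n)
    (hbd : ∀ n, (n + 1) * d n ≤ e (2 * n + 1))
    (hfin : limsup (fun n : ℕ => ENNReal.ofReal (Real.log (d n) / Real.log n)) atTop ≠ ⊤) :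
    limsup (fun n : ℕ => ENNReal.ofReal (Real.log (d n) / Real.log n)) atTop + 1
      ≤ limsup (fun n : ℕ => ENNReal.ofReal (Real.log (e n) / Real.log n)) atTop := by
  set a : ℕ → ℝ≥0∞ := fun n => ENNReal.ofReal (Real.log (d n) / Real.log n) with ha
  set b : ℕ → ℝ≥0∞ := fun n => ENNReal.ofReal (Real.log (e n) / Real.log n) with hb
  have hu : Tendsto (fun n : ℕ => 2 * n + 1) atTop atTop := by
    apply tendsto_atTop_mono (fun n => by omega : ∀ n : ℕ, n ≤ 2 * n + 1) tendsto_id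
  have hsub : limsup (fun n => b (2 * n + 1)) atTop ≤ limsup b atTop :=
    gk_limsup_subseq_le b _ hu
  refine le_trans (ENNReal.le_of_forall_pos_le_add fun ε hε hctop => ?_) hsub
  have hlt : limsup a atTop < limsup a atTop + 1 := ENNReal.lt_add_right hfin one_ne_zero
  have hne : limsup a atTop + 1 ≠ ⊤ := by
    simp [ENNReal.add_ne_top, hfin]
  set M : ℝ := (limsup a atTop + 1).toReal with hM
  have hM0 : 0 ≤ M := ENNReal.toReal_nonneg
  have hMeq : ENNReal.ofReal M = limsup a atTop + 1 := ENNReal.ofReal_toReal hne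
  have hev1 : ∀ᶠ n in atTop, a n ≤ ENNReal.ofReal M := by
    filter_upwards [eventually_lt_of_limsup_lt hlt] with n hn
    rw [hMeq]; exact hn.le
  have hεR : (0 : ℝ) < (ε : ℝ) := by exact_mod_cast hε
  have hlog : Tendsto (fun n : ℕ => Real.log ((2 * n + 1 : ℕ) : ℝ)) atTop atTop :=
    Real.tendsto_log_atTop.comp (tendsto_natCast_atTop_atTop.comp hu)
  have hev2 : ∀ᶠ n : ℕ in atTop,
      (M + 1) * Real.log 3 ≤ (ε : ℝ) * Real.log ((2 * n + 1 : ℕ) : ℝ) := by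
    filter_upwards [hlog.eventually_ge_atTop ((M + 1) * Real.log 3 / (ε : ℝ))] with n hn
    rw [div_le_iff₀ hεR] at hn
    linarith
  have hevle : ∀ᶠ n in atTop, a n + 1 ≤ b (2 * n + 1) + (ε : ℝ≥0∞) := by
    filter_upwards [hev1, hev2, eventually_ge_atTop 2] with n hA hB hn
    set P : ℝ := Real.log (d n) with hP
    set Q : ℝ := Real.log (e (2 * n + 1)) with hQ
    set s : ℝ := Real.log n with hs
    set t : ℝ := Real.log ((2 * n + 1 : ℕ) : ℝ) with ht
    set L3 : ℝ := Real.log 3 with hL3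
    have hs0 : 0 < s := Real.log_pos (by exact_mod_cast hn)
    have hst : s ≤ t := Real.log_le_log (by positivity) (by push_cast; linarith)
    have ht0 : 0 < t := lt_of_lt_of_le hs0 hst
    have hL30 : 0 ≤ L3 := Real.log_nonneg (by norm_num)
    have hP0 : 0 ≤ P := Real.log_natCast_nonneg _
    have hdn1 : (1 : ℝ) ≤ (d n : ℝ) := by exact_mod_cast hd n
    have hen1 : (1 : ℝ) ≤ ((n : ℝ) + 1) * (d n : ℝ) := by
      nlinarith [Nat.cast_nonneg (α := ℝ) n]
    have hQge : t - L3 + P ≤ Q := by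
      have h1 : Real.log (((n : ℝ) + 1) * (d n : ℝ)) ≤ Q := by
        rw [hQ]
        apply Real.log_le_log (by linarith)
        have := hbd n
        push_cast
        exact_mod_cast (by exact_mod_cast this : ((n + 1) * d n : ℕ) ≤ (e (2 * n + 1) : ℕ))
      rw [Real.log_mul (by linarith) (by linarith)] at h1
      have h2 : t ≤ L3 + Real.log ((n : ℝ) + 1) := by
        rw [ht, hL3, ← Real.log_mul (by norm_num) (by positivity)]
        apply Real.log_le_log (by positivity)
        push_cast; linarith
      linarith
    have htL : t ≤ L3 + s := by
      rw [ht, hL3, hs, ← Real.log_mul (by norm_num) (by positivity : (n : ℝ) ≠ 0)]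
      apply Real.log_le_log (by positivity)
      push_cast
      have : (2 : ℝ) ≤ (n : ℝ) := by exact_mod_cast hn
      linarith
    have hPM : P ≤ M * s := by
      have : P / s ≤ M := by
        rw [← ENNReal.ofReal_le_ofReal_iff hM0]
        exact hA
      calc P = (P / s) * s := by field_simp
        _ ≤ M * s := mul_le_mul_of_nonneg_right this hs0.le
    have hQ0 : 0 ≤ Q := Real.log_natCast_nonneg _
    have key : P * t + s * t ≤ Q * s + (ε : ℝ) * s * t := by
      have h1 : P * (t - s) ≤ M * s * L3 := by
        nlinarith [mul_le_mul_of_nonneg_right hPM (sub_nonneg.2 hst),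
          mul_le_mul_of_nonneg_left (show t - s ≤ L3 by linarith) (mul_nonneg hM0 hs0.le)]
      have h2 : (M + 1) * L3 * s ≤ (ε : ℝ) * t * s :=
        mul_le_mul_of_nonneg_right hB hs0.le
      have h3 : (t - L3 + P) * s ≤ Q * s := mul_le_mul_of_nonneg_right hQge hs0.le
      nlinarith
    have hreal : P / s + 1 ≤ Q / t + (ε : ℝ) := by
      have e1 : P / s + 1 = (P + s) / s := by field_simp
      have e2 : Q / t + (ε : ℝ) = (Q + (ε : ℝ) * t) / t := by field_simp
      rw [e1, e2, div_le_div_iff₀ hs0 ht0]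
      nlinarith
    have lhs_eq : a n + 1 = ENNReal.ofReal (P / s + 1) := by
      rw [ENNReal.ofReal_add (div_nonneg hP0 hs0.le) zero_le_one, ENNReal.ofReal_one]
    rw [lhs_eq]
    refine le_trans (ENNReal.ofReal_le_ofReal hreal) ?_
    rw [ENNReal.ofReal_add (div_nonneg hQ0 ht0.le) hεR.le, ENNReal.ofReal_coe_nnreal]
  calc limsup a atTop + 1 = limsup (fun n => a n + 1) atTop :=
        (gk_ennreal_limsup_add_const a 1).symm
    _ ≤ limsup (fun n => b (2 * n + 1) + (ε : ℝ≥0∞)) atTop := limsup_le_limsup hevle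
    _ = limsup (fun n => b (2 * n + 1)) atTop + (ε : ℝ≥0∞) :=
        gk_ennreal_limsup_add_const _ _

/-- If a domain `A` of finite GK dimension contains an element `z` that is right
algebraically independent over a subalgebra `B`, then `GKdim A ≥ GKdim B + 1`. -/
theorem stmt_4 {K A : Type*} [Field K] [Ring A] [Algebra K A]
    [Nontrivial A] [NoZeroDivisors A]
    (B : Subalgebra K A) (hfin : gkDim K A < ⊤) (z : A)
    (hz : ∀ (n : ℕ) (b : ℕ → A), (∀ i, b i ∈ B) → (∃ i, i ≤ n ∧ b i ≠ 0) →
      ∑ i ∈ Finset.range (n + 1), b i * z ^ i ≠ 0) :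
    gkDim K ↥B + 1 ≤ gkDim K A := by
  have key : ∀ (V : Submodule K ↥B), (1 : ↥B) ∈ V → FiniteDimensional K V →
      limsup (fun n : ℕ =>
          ENNReal.ofReal (Real.log (finrank K ↥(V ^ n)) / Real.log n)) atTop + 1
        ≤ gkDim K A := by
    intro V h1 h2
    set f : ↥B →ₗ[K] A := B.val.toLinearMap with hf
    have hinjf : Function.Injective f := Subtype.val_injective
    set W : Submodule K A := V.map f with hWdef
    have hWB : W ≤ Subalgebra.toSubmodule B := by
      rintro x ⟨y, -, rfl⟩; exact y.2
    have h1W : (1 : A) ∈ W := ⟨1, h1, rfl⟩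
    have hWfd : FiniteDimensional K W :=
      (Submodule.fg_iff_finiteDimensional _).1
        (Submodule.FG.map _ ((Submodule.fg_iff_finiteDimensional V).2 h2))
    have hdeq : ∀ n : ℕ, finrank K ↥(V ^ n) = finrank K ↥(W ^ n) := by
      intro n
      have : W ^ n = (V ^ n).map f := by
        rw [hWdef, hf, ← Submodule.map_pow]
      rw [this]
      exact LinearEquiv.finrank_eq (Submodule.equivMapOfInjective f hinjf (V ^ n))
    set U : Submodule K A := W ⊔ Submodule.span K {z} with hUdef
    have h1U : (1 : A) ∈ U := Submodule.mem_sup_left h1W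
    have hUfd : FiniteDimensional K U := by
      have : FiniteDimensional K ↥(Submodule.span K {z}) :=
        (Submodule.fg_iff_finiteDimensional _).1 (Submodule.fg_span_singleton z)
      infer_instance
    have hUle : limsup (fun n : ℕ =>
        ENNReal.ofReal (Real.log (finrank K ↥(U ^ n)) / Real.log n)) atTop ≤ gkDim K A :=
      le_iSup_of_le U (le_iSup_of_le h1U (le_iSup_of_le hUfd le_rfl))
    have hWle : limsup (fun n : ℕ =>
        ENNReal.ofReal (Real.log (finrank K ↥(W ^ n)) / Real.log n)) atTop ≤ gkDim K A :=
      le_iSup_of_le W (le_iSup_of_le h1W (le_iSup_of_le hWfd le_rfl))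
    have hWfin : limsup (fun n : ℕ =>
        ENNReal.ofReal (Real.log (finrank K ↥(W ^ n)) / Real.log n)) atTop ≠ ⊤ :=
      ne_top_of_le_ne_top hfin.ne hWle
    have hWfg : W.FG := (Submodule.fg_iff_finiteDimensional W).2 hWfd
    have hd : ∀ n : ℕ, 1 ≤ finrank K ↥(W ^ n) := by
      intro n
      haveI : FiniteDimensional K ↥(W ^ n) :=
        (Submodule.fg_iff_finiteDimensional _).1 (hWfg.pow n)
      have hmem : (1 : A) ∈ W ^ n := by
        simpa using Submodule.pow_mem_pow W h1W n
      haveI : Nontrivial ↥(W ^ n) := by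
        refine ⟨⟨⟨1, hmem⟩, 0, ?_⟩⟩
        intro h
        exact one_ne_zero (congrArg Subtype.val h)
      exact Module.finrank_pos
    have hbd : ∀ n : ℕ, (n + 1) * finrank K ↥(W ^ n) ≤ finrank K ↥(U ^ (2 * n + 1)) :=
      fun n => gk_key_bound B z hz W hWB h1W n
    have hmain := gk_limsup_aux (fun n => finrank K ↥(W ^ n)) (fun n => finrank K ↥(U ^ n))
      hd hbd hWfin
    have heq : (fun n : ℕ =>
        ENNReal.ofReal (Real.log (finrank K ↥(V ^ n)) / Real.log n))
        = (fun n : ℕ =>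
        ENNReal.ofReal (Real.log (finrank K ↥(W ^ n)) / Real.log n)) := by
      funext n; rw [hdeq n]
    rw [heq]
    exact le_trans hmain hUle
  have hone : (1 : ℝ≥0∞) ≤ gkDim K A := by
    haveI : FiniteDimensional K ↥(Submodule.span K {(1 : ↥B)}) :=
      (Submodule.fg_iff_finiteDimensional _).1 (Submodule.fg_span_singleton _)
    have := key (Submodule.span K {(1 : ↥B)}) (Submodule.mem_span_singleton_self 1) this
    exact le_trans le_add_self this
  rw [gkDim, ENNReal.iSup_add]
  refine iSup_le fun V => ?_
  by_cases h1 : (1 : ↥B) ∈ V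
  · by_cases h2 : FiniteDimensional K V
    · rw [iSup_pos h1, iSup_pos h2]
      exact key V h1 h2
    · rw [iSup_pos h1, iSup_neg h2]
      simpa using hone
  · rw [iSup_neg h1]
    simpa using hone
end

section
/- Let P be a non-commutative Poisson algebra over K whose associative product is a domain, and let z ∈ P. If w ∈ D(z,λ) \ {0} for some nonzero eigenvalue λ ∈ K (i.e., {z,w} = λw, w ≠ 0, λ ≠ 0), then w is right algebraically independent over N(z) = ∪_m ker(ad_z^m): for every nonzero polynomial f(X) = Σ_{i=0}^n a_i X^i with all a_i ∈ N(z), one has Σ a_i w^i ≠ 0. -/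
private lemma commute_aux {K P : Type*} [Field K] [AddCommGroup P] [Module K P]
    (f : Module.End K P) (c d : K) : Commute (f - c • 1) (f - d • 1) := by
  have h1 : Commute f ((1 : Module.End K P)) := Commute.one_right f
  exact Commute.sub_left (Commute.sub_right (Commute.refl f) (h1.smul_right d))
    (Commute.sub_right ((Commute.one_left f).smul_left c)
      (((Commute.refl (1 : Module.End K P)).smul_left c).smul_right d))

/-- If a finite sum of generalized eigenvectors (for pairwise distinct
eigenvalues) vanishes, then each of them vanishes. -/
lemma sum_genEigenspace_eq_zero {K P : Type*} [Field K] [AddCommGroup P] [Module K P]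
    (f : Module.End K P) (μ : ℕ → K) (hμ : ∀ i j, μ i = μ j → i = j) :
    ∀ n : ℕ, ∀ x : ℕ → P, (∀ i, x i ∈ f.genEigenspace (μ i) ⊤) →
    (∑ i ∈ Finset.range (n + 1), x i) = 0 → ∀ i ≤ n, x i = 0 := by
  intro n
  induction n with
  | zero =>
    intro x hx h i hi
    interval_cases i
    simpa using h
  | succ n ih =>
    intro x hx h i hi
    obtain ⟨m, hm⟩ := Module.End.mem_genEigenspace_top.mp (hx (n + 1))
    rw [LinearMap.mem_ker] at hm
    set g : Module.End K P := (f - μ (n + 1) • 1) ^ m with hg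
    have hsum : (∑ j ∈ Finset.range (n + 1), g (x j)) = 0 := by
      have := congrArg g h
      rwa [Finset.sum_range_succ, map_add, hm, add_zero, map_zero, map_sum] at this
    have hgx : ∀ j, g (x j) ∈ f.genEigenspace (μ j) ⊤ := by
      intro j
      obtain ⟨l, hl⟩ := Module.End.mem_genEigenspace_top.mp (hx j)
      rw [LinearMap.mem_ker] at hl
      refine Module.End.mem_genEigenspace_top.mpr ⟨l, ?_⟩
      rw [LinearMap.mem_ker, ← Module.End.mul_apply,
        ((commute_aux f (μ j) (μ (n + 1))).pow_pow l m).eq, Module.End.mul_apply, hl, map_zero]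
    have hzero : ∀ j ≤ n, g (x j) = 0 := ih (fun j => g (x j)) hgx hsum
    -- each x j (j ≤ n) lies in two distinct generalized eigenspaces
    have hxz : ∀ j ≤ n, x j = 0 := by
      intro j hj
      have h1 : x j ∈ f.genEigenspace (μ (n + 1)) ⊤ :=
        Module.End.mem_genEigenspace_top.mpr ⟨m, LinearMap.mem_ker.mpr (hzero j hj)⟩
      have hne : μ j ≠ μ (n + 1) := fun hcon => by
        have := hμ j (n + 1) hcon; omega
      have := (f.disjoint_genEigenspace hne ⊤ ⊤).le_bot ⟨hx j, h1⟩
      simpa using this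
    rcases Nat.lt_or_ge i (n + 1) with hlt | hge
    · exact hxz i (Nat.lt_succ_iff.mp hlt)
    · have hieq : i = n + 1 := le_antisymm hi hge
      subst hieq
      have : (∑ j ∈ Finset.range (n + 1), x j) = 0 :=
        Finset.sum_eq_zero fun j hj => hxz j (Nat.lt_succ_iff.mp (Finset.mem_range.mp hj))
      rw [Finset.sum_range_succ, this, zero_add] at h
      exact h

/-- In a Poisson algebra whose product is a domain, a nonzero eigenvector `w` of
`ad_z` with nonzero eigenvalue is right algebraically independent over the
nil-algebra `N(z)`. -/
theorem stmt_5 {K P : Type*} [Field K] [CharZero K] [IsAlgClosed K]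
    [Ring P] [Algebra K P] [NoZeroDivisors P]
    (B : PoissonBracket K P) (z w : P) (lam : K)
    (hlam : lam ≠ 0) (hw : w ≠ 0) (hew : B.bracket z w = lam • w)
    (n : ℕ) (a : ℕ → P) (ha : ∀ i, ∃ m : ℕ, (B.bracket z ^ m) (a i) = 0)
    (hne : ∃ i, i ≤ n ∧ a i ≠ 0) :
    ∑ i ∈ Finset.range (n + 1), a i * w ^ i ≠ 0 := by
  intro hcon
  set f : Module.End K P := B.bracket z with hf
  set μ : ℕ → K := fun i => (i : K) * lam with hμdef
  -- f (w ^ i) = μ i • w ^ i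
  have hwi : ∀ i : ℕ, f (w ^ i) = μ i • w ^ i := by
    intro i
    induction i with
    | zero =>
      have h1 : f (1 : P) = 0 := by
        have h2 : f 1 = f 1 + f 1 := by simpa using B.leibniz z 1 1
        exact add_eq_left.mp h2.symm
      simp [hμdef, h1]
    | succ i ihw =>
      rw [pow_succ, B.leibniz, ihw, hew, smul_mul_assoc, mul_smul_comm, ← pow_succ,
        ← add_smul, hμdef]
      push_cast
      ring_nf
  -- single step
  have hstep : ∀ (i : ℕ) (y : P), (f - μ i • 1) (y * w ^ i) = f y * w ^ i := by
    intro i y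
    simp only [LinearMap.sub_apply, LinearMap.smul_apply, Module.End.one_apply]
    rw [hf, B.leibniz, ← hf, hwi i, mul_smul_comm]
    abel
  have hpow : ∀ (i m : ℕ) (y : P),
      ((f - μ i • 1) ^ m) (y * w ^ i) = (f ^ m) y * w ^ i := by
    intro i m
    induction m with
    | zero => intro y; simp
    | succ m ihm =>
      intro y
      rw [pow_succ', pow_succ', Module.End.mul_apply, ihm, hstep, Module.End.mul_apply]
  -- each term is a generalized eigenvector
  have hmem : ∀ i, a i * w ^ i ∈ f.genEigenspace (μ i) ⊤ := by
    intro i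
    obtain ⟨m, hm⟩ := ha i
    exact Module.End.mem_genEigenspace_top.mpr
      ⟨m, LinearMap.mem_ker.mpr (by rw [hpow, hm, zero_mul])⟩
  have hμinj : ∀ i j, μ i = μ j → i = j := by
    intro i j hij
    have : (i : K) = (j : K) := mul_right_cancel₀ hlam hij
    exact_mod_cast this
  have hall := sum_genEigenspace_eq_zero f μ hμinj n (fun i => a i * w ^ i) hmem hcon
  obtain ⟨i, hi, hai⟩ := hne
  have := hall i hi
  rcases mul_eq_zero.mp this with h1 | h2
  · exact hai h1
  · exact pow_ne_zero i hw h2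
end

section
/- Let P be a non-commutative Poisson algebra over K and let x, y ∈ P with C(x) = C(y) (equal centralizers with respect to the bracket). Define N^k(x) = ker(ad_x^{k+1}) and N^k(y) = ker(ad_y^{k+1}). Then N^k(x) = N^k(y) for all k ≥ 0, and consequently N(x) = N(y). -/
namespace Module.End

variable {R M : Type*} [Semiring R] [AddCommMonoid M] [Module R M]

theorem ker_pow_le_ker_pow_of_commute {f g : Module.End R M} (hfg : Commute f g)
    (h : LinearMap.ker f ≤ LinearMap.ker g) (k : ℕ) :
    LinearMap.ker (f ^ k) ≤ LinearMap.ker (g ^ k) := by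
  induction k with
  | zero => simp
  | succ k ih =>
    intro w hw
    have hgf : (g ^ k) (f w) = 0 := ih (by simpa [pow_succ] using hw)
    have hfg' : f ((g ^ k) w) = 0 := by
      rw [← Module.End.mul_apply, (hfg.pow_right k).eq, Module.End.mul_apply, hgf]
    simpa [pow_succ'] using h hfg'

theorem ker_pow_eq_ker_pow_of_commute {f g : Module.End R M} (hfg : Commute f g)
    (h : LinearMap.ker f = LinearMap.ker g) (k : ℕ) :
    LinearMap.ker (f ^ k) = LinearMap.ker (g ^ k) :=
  (ker_pow_le_ker_pow_of_commute hfg h.le k).antisymm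
    (ker_pow_le_ker_pow_of_commute hfg.symm h.ge k)

end Module.End

namespace PoissonBracket

variable {K P : Type*} [CommRing K] [Ring P] [Algebra K P] (B : PoissonBracket K P)

theorem bracket_self [IsAddTorsionFree P] (x : P) : B.bracket x x = 0 :=
  self_eq_neg.mp (B.antisymm x x)

theorem commute_bracket {x y : P} (hxy : B.bracket x y = 0) :
    Commute (B.bracket x) (B.bracket y) := by
  ext w
  simpa [hxy] using B.jacobi x y w

end PoissonBracket

/-- If `x, y` have equal centralizers `C(x) = C(y)` (kernels of `ad_x`, `ad_y`),
then `ker (ad_x^{k+1}) = ker (ad_y^{k+1})` for all `k`, and `N(x) = N(y)`. -/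
theorem stmt_6 {K P : Type*} [Field K] [CharZero K] [Ring P] [Algebra K P]
    (B : PoissonBracket K P) (x y : P)
    (h : LinearMap.ker (B.bracket x) = LinearMap.ker (B.bracket y)) :
    (∀ k : ℕ,
      LinearMap.ker (B.bracket x ^ (k + 1)) = LinearMap.ker (B.bracket y ^ (k + 1))) ∧
    {w : P | ∃ m : ℕ, (B.bracket x ^ m) w = 0} =
      {w : P | ∃ m : ℕ, (B.bracket y ^ m) w = 0} := by
  have : IsAddTorsionFree P := .of_isTorsionFree K P
  have hxy : B.bracket x y = 0 := by
    rw [← LinearMap.mem_ker, h]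
    exact B.bracket_self y
  have hker := Module.End.ker_pow_eq_ker_pow_of_commute (B.commute_bracket hxy) h
  refine ⟨fun k => hker (k + 1), ?_⟩
  simp_rw [← LinearMap.mem_ker, hker]
end

section
/- Let P be a non-commutative Poisson algebra over K whose associative algebra is a right Ore domain with division ring P̃, the bracket extending to P̃. Suppose x ∈ P is strictly semisimple in P, i.e., P = ⊕_{μ ∈ Ev(x,P)} D(x,P,μ) where D(x,P,μ) = {y ∈ P : {x,y} = μy}. If z ∈ P̃ is nonzero and {x,z} = λz for some λ ∈ K, then there exist μ ∈ K, u ∈ D(x,P,λ+μ) and a nonzero w ∈ D(x,P,μ) such that z = u w⁻¹. -/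
/-!
The set `I` of all `y ∈ P` with `z y ∈ P` is a nonzero right ideal (it contains any
denominator of `z`), and it is `ad_x`-invariant because `{x, z y} = λ z y + z {x, y}`.
An `ad_x`-invariant nonzero subspace of a space spanned by eigenvectors of `ad_x`
contains an eigenvector `w`: subtracting `μ₀ • b` from `ad_x b` shortens the eigenvector
expansion of `b`. Then `u := z w` is an eigenvector of `ad_x` with eigenvalue `λ + μ`
by the Leibniz rule, and `z = u w⁻¹`.
-/

namespace Module.End

variable {K V : Type*} [Field K] [AddCommGroup V] [Module K V] {f : End K V} {p : Submodule K V}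

theorem exists_hasEigenvector_mem_of_sum_mem (hp : ∀ v ∈ p, f v ∈ p) (s : Finset K)
    (c : K → V) (hc : ∀ μ ∈ s, c μ ∈ f.eigenspace μ) (hsum : ∑ μ ∈ s, c μ ∈ p)
    (hne : ∑ μ ∈ s, c μ ≠ 0) : ∃ μ, ∃ w ∈ p, f.HasEigenvector μ w := by
  classical
  induction s using Finset.strongInduction generalizing c with
  | _ s ih =>
    obtain ⟨μ₀, hμ₀⟩ := Finset.nonempty_of_sum_ne_zero hne
    set b := ∑ μ ∈ s, c μ
    by_cases hb : f b = μ₀ • b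
    · exact ⟨μ₀, b, hsum, mem_eigenspace_iff.mpr hb, hne⟩
    have hshorter : f b - μ₀ • b = ∑ μ ∈ s.erase μ₀, (μ - μ₀) • c μ := by
      have hfb : f b = ∑ μ ∈ s, μ • c μ :=
        (map_sum f c s).trans (Finset.sum_congr rfl fun μ hμ => mem_eigenspace_iff.mp (hc μ hμ))
      rw [hfb, Finset.smul_sum, ← Finset.sum_sub_distrib, ← Finset.sum_erase_add _ _ hμ₀]
      simp only [sub_self, add_zero, sub_smul]
    refine ih _ (Finset.erase_ssubset hμ₀) (fun μ => (μ - μ₀) • c μ) (fun μ hμ => ?_) ?_ ?_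
    · exact Submodule.smul_mem _ _ (hc μ (Finset.mem_of_mem_erase hμ))
    · exact hshorter ▸ p.sub_mem (hp b hsum) (p.smul_mem μ₀ hsum)
    · exact hshorter ▸ sub_ne_zero_of_ne hb

theorem exists_hasEigenvector_mem (hV : ⨆ μ, f.eigenspace μ = ⊤) (hp : ∀ v ∈ p, f v ∈ p)
    (hp₀ : p ≠ ⊥) : ∃ μ, ∃ w ∈ p, f.HasEigenvector μ w := by
  obtain ⟨b, hbp, hb₀⟩ := p.exists_mem_ne_zero_of_ne_bot hp₀
  have hbV : b ∈ ⨆ μ, f.eigenspace μ := hV ▸ Submodule.mem_top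
  obtain ⟨c, hc, rfl⟩ := (Submodule.mem_iSup_iff_exists_finsupp _ _).mp hbV
  exact exists_hasEigenvector_mem_of_sum_mem hp c.support c (fun μ _ => hc μ) hbp hb₀

end Module.End

theorem PoissonBracket.bracket_mul_of_eigen {K A : Type*} [CommRing K] [Ring A] [Algebra K A]
    (B : PoissonBracket K A) {x a b : A} {lam μ : K} (ha : B.bracket x a = lam • a)
    (hb : B.bracket x b = μ • b) : B.bracket x (a * b) = (lam + μ) • (a * b) := by
  rw [B.leibniz, ha, hb, smul_mul_assoc, mul_smul_comm, add_smul]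

section Denominators

variable {K P D : Type*} [Field K] [Ring P] [Algebra K P] [DivisionRing D] [Algebra K D]

/-- The right ideal `{y ∈ P | z y ∈ P}` of denominators of `z`, as a `K`-subspace of `P`. -/
def denominators (ι : P →ₐ[K] D) (z : D) : Submodule K P :=
  (LinearMap.range ι.toLinearMap).comap (LinearMap.mulLeft K z ∘ₗ ι.toLinearMap)

theorem mem_denominators {ι : P →ₐ[K] D} {z : D} {y : P} :
    y ∈ denominators ι z ↔ ∃ u, ι u = z * ι y :=
  Iff.rfl

theorem denominators_ne_bot {ι : P →ₐ[K] D} (hinj : Function.Injective ι) {z : D} {a b : P}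
    (hb : b ≠ 0) (hz : z = ι a * (ι b)⁻¹) : denominators ι z ≠ ⊥ := by
  have hιb : ι b ≠ 0 := (map_ne_zero_iff ι hinj).mpr hb
  refine (Submodule.ne_bot_iff _).mpr ⟨b, mem_denominators.mpr ⟨a, ?_⟩, hb⟩
  rw [hz, mul_assoc, inv_mul_cancel₀ hιb, mul_one]

theorem bracket_mem_denominators (B : PoissonBracket K P) (BD : PoissonBracket K D)
    {ι : P →ₐ[K] D} (hbr : ∀ a b : P, ι (B.bracket a b) = BD.bracket (ι a) (ι b))
    {x : P} {z : D} {lam : K} (hev : BD.bracket (ι x) z = lam • z) {y : P}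
    (hy : y ∈ denominators ι z) : B.bracket x y ∈ denominators ι z := by
  obtain ⟨u, hu⟩ := mem_denominators.mp hy
  refine mem_denominators.mpr ⟨B.bracket x u - lam • u, ?_⟩
  rw [map_sub, map_smul, hbr, hu, BD.leibniz, hev, smul_mul_assoc, add_sub_cancel_left, hbr]

end Denominators

theorem stmt_9_general {K P D : Type*} [Field K]
    [Ring P] [Algebra K P]
    [DivisionRing D] [Algebra K D]
    (B : PoissonBracket K P) (BD : PoissonBracket K D)
    (ι : P →ₐ[K] D) (hinj : Function.Injective ι)
    (hbr : ∀ a b : P, ι (B.bracket a b) = BD.bracket (ι a) (ι b))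
    (hfrac : ∀ x : D, ∃ a b : P, b ≠ 0 ∧ x = ι a * (ι b)⁻¹)
    (x : P)
    (hss : (⨆ μ : K, LinearMap.ker (B.bracket x - μ • (1 : Module.End K P))) = ⊤)
    (z : D) (lam : K) (hev : BD.bracket (ι x) z = lam • z) :
    ∃ (μ : K) (u w : P), B.bracket x u = (lam + μ) • u ∧
      B.bracket x w = μ • w ∧ w ≠ 0 ∧ z = ι u * (ι w)⁻¹ := by
  simp_rw [← Module.End.eigenspace_def] at hss
  obtain ⟨a, b, hb, hzab⟩ := hfrac z
  obtain ⟨μ, w, hwI, hw⟩ := Module.End.exists_hasEigenvector_mem hss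
    (fun y => bracket_mem_denominators B BD hbr hev) (denominators_ne_bot hinj hb hzab)
  obtain ⟨u, hu⟩ := mem_denominators.mp hwI
  have hwev : B.bracket x w = μ • w := hw.apply_eq_smul
  have hιw : ι w ≠ 0 := (map_ne_zero_iff ι hinj).mpr hw.2
  have huev : B.bracket x u = (lam + μ) • u := hinj <| by
    rw [hbr, hu, BD.bracket_mul_of_eigen hev (by rw [← hbr, hwev, map_smul]), map_smul, hu]
  refine ⟨μ, u, w, huev, hwev, hw.2, ?_⟩
  rw [hu, mul_assoc, mul_inv_cancel₀ hιw, mul_one]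

/-- If `x ∈ P` is strictly semisimple (the eigenspaces of `ad_x` span `P`) and
`z` is a nonzero eigenvector of `ad_x` in the right division ring of fractions
`D` of `P`, then `z = u w⁻¹` for eigenvectors `u, w` of `ad_x` in `P`. -/
theorem stmt_9 {K P D : Type*} [Field K] [CharZero K] [IsAlgClosed K]
    [Ring P] [Algebra K P] [NoZeroDivisors P]
    [DivisionRing D] [Algebra K D]
    (B : PoissonBracket K P) (BD : PoissonBracket K D)
    (ι : P →ₐ[K] D) (hinj : Function.Injective ι)
    (hbr : ∀ a b : P, ι (B.bracket a b) = BD.bracket (ι a) (ι b))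
    (hfrac : ∀ x : D, ∃ a b : P, b ≠ 0 ∧ x = ι a * (ι b)⁻¹)
    (x : P)
    (hss : (⨆ μ : K, LinearMap.ker (B.bracket x - μ • (1 : Module.End K P))) = ⊤)
    (z : D) (hz : z ≠ 0) (lam : K) (hev : BD.bracket (ι x) z = lam • z) :
    ∃ (μ : K) (u w : P), B.bracket x u = (lam + μ) • u ∧
      B.bracket x w = μ • w ∧ w ≠ 0 ∧ z = ι u * (ι w)⁻¹ :=
  stmt_9_general B BD ι hinj hbr hfrac x hss z lam hev
end

section
/- Let P be a non-commutative Poisson algebra over K, (P,·) a right Ore domain with division ring P̃, bracket extending to P̃. If x ∈ P satisfies F(x,P) = P (every element of P generates a finite-dimensional K[ad_x]-module), then F(x,P̃) = P C⁻¹ where C = (∪_{λ ∈ Ev(x,P)} D(x,P,λ)) \ {0}; i.e., every element of F(x,P̃) can be written as u w⁻¹ with u ∈ P and w a nonzero eigenvector of ad_x in P, and conversely all such elements lie in F(x,P̃). -/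
namespace PoissonBracket

variable {K P : Type*} [CommRing K]

lemma bracket_one [Ring P] [Algebra K P] (B : PoissonBracket K P) (x : P) :
    B.bracket x 1 = 0 := by
  simpa using B.leibniz x 1 1

lemma bracket_inv [DivisionRing P] [Algebra K P] (B : PoissonBracket K P) (x : P) {d : P}
    (hd : d ≠ 0) : B.bracket x d⁻¹ = -(d⁻¹ * B.bracket x d * d⁻¹) := by
  have h := B.leibniz x d d⁻¹
  rw [mul_inv_cancel₀ hd, B.bracket_one] at h
  calc B.bracket x d⁻¹ = d⁻¹ * (d * B.bracket x d⁻¹) := by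
        rw [← mul_assoc, inv_mul_cancel₀ hd, one_mul]
    _ = -(d⁻¹ * B.bracket x d * d⁻¹) := by
        rw [eq_neg_of_add_eq_zero_right h.symm, mul_neg, mul_assoc]

end PoissonBracket

namespace Module.End

section CommRing

variable {K V : Type*} [CommRing K] [AddCommGroup V] [Module K V]

/-- The `K[f]`-submodule generated by `v`. -/
def orbitSpan (f : End K V) (v : V) : Submodule K V :=
  Submodule.span K (Set.range fun n : ℕ => (f ^ n) v)

variable (f : End K V)

lemma self_mem_orbitSpan (v : V) : v ∈ f.orbitSpan v :=
  Submodule.subset_span ⟨0, by simp⟩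

lemma orbitSpan_mem_invtSubmodule (v : V) : f.orbitSpan v ∈ f.invtSubmodule := by
  rw [mem_invtSubmodule_iff_map_le, orbitSpan, Submodule.map_span, Submodule.span_le]
  rintro _ ⟨_, ⟨n, rfl⟩, rfl⟩
  exact Submodule.subset_span ⟨n + 1, by dsimp only; rw [pow_succ', mul_apply]⟩

lemma orbitSpan_le {v : V} {S : Submodule K V} (hS : S ∈ f.invtSubmodule) (hv : v ∈ S) :
    f.orbitSpan v ≤ S := by
  rw [orbitSpan, Submodule.span_le]
  rintro _ ⟨n, rfl⟩
  induction n with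
  | zero => simpa using hv
  | succ n ih => dsimp only at ih ⊢; rw [pow_succ', mul_apply]; exact hS ih

end CommRing

lemma exists_hasEigenvector_mem_s10 {K V : Type*} [Field K] [IsAlgClosed K] [AddCommGroup V]
    [Module K V] (f : End K V) {S : Submodule K V} [FiniteDimensional K S]
    (hS : S ∈ f.invtSubmodule) (hS₀ : S ≠ ⊥) : ∃ μ v, v ∈ S ∧ f.HasEigenvector μ v := by
  have := Submodule.nontrivial_iff_ne_bot.mpr hS₀
  obtain ⟨μ, hμ⟩ := exists_eigenvalue (f.restrict hS)
  obtain ⟨v, hv⟩ := hμ.exists_hasEigenvector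
  refine ⟨μ, v, v.2, mem_eigenspace_iff.mpr ?_, fun h => hv.2 (Subtype.ext h)⟩
  exact congrArg Subtype.val hv.apply_eq_smul

end Module.End

open Module.End

section Fractions

variable {K P D : Type*} [CommRing K] [Ring P] [Algebra K P] [DivisionRing D] [Algebra K D]
  (ι : P →ₐ[K] D)

def rightDenominators (W : Submodule K D) : Submodule K P where
  carrier := {p | ∀ v ∈ W, v * ι p ∈ ι.range}
  zero_mem' _ _ := by simp
  add_mem' hp hq v hv := by simpa [mul_add] using add_mem (hp v hv) (hq v hv)
  smul_mem' c p hp v hv := by simpa using Subalgebra.smul_mem _ (hp v hv) c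

lemma exists_ne_zero_mem_rightDenominators (hinj : Function.Injective ι)
    (hfrac : ∀ z : D, ∃ a b : P, b ≠ 0 ∧ z = ι a * (ι b)⁻¹) {W : Submodule K D} (hW : W.FG) :
    ∃ w ≠ 0, w ∈ rightDenominators ι W := by
  obtain ⟨s, rfl⟩ := hW
  suffices ∃ w, ι w ≠ 0 ∧ ∀ v ∈ s, v * ι w ∈ ι.range by
    obtain ⟨w, hw₀, hw⟩ := this
    refine ⟨w, fun h => hw₀ (by rw [h, map_zero]), fun v hv => ?_⟩
    have hle : Submodule.span K ↑s ≤
        (Subalgebra.toSubmodule ι.range).comap (LinearMap.mulRight K (ι w)) :=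
      Submodule.span_le.mpr hw
    exact hle hv
  classical
  induction s using Finset.induction_on with
  | empty => exact ⟨1, by simp, by simp⟩
  | insert d s _ ih =>
    obtain ⟨w, hw₀, hw⟩ := ih
    obtain ⟨a, b, hb₀, hab⟩ := hfrac (d * ι w)
    have hιb : ι b ≠ 0 := (map_ne_zero_iff ι hinj).mpr hb₀
    refine ⟨w * b, by simpa using mul_ne_zero hw₀ hιb, ?_⟩
    rintro v hv
    rcases Finset.mem_insert.mp hv with rfl | hv
    · refine ι.mem_range.mpr ⟨a, ?_⟩
      rw [map_mul, ← mul_assoc, hab, inv_mul_cancel_right₀ hιb]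
    · obtain ⟨q, hq⟩ := ι.mem_range.mp (hw v hv)
      exact ι.mem_range.mpr ⟨q * b, by rw [map_mul, hq, map_mul, mul_assoc]⟩

variable {B : PoissonBracket K P} {BD : PoissonBracket K D}
  (hbr : ∀ a b : P, ι (B.bracket a b) = BD.bracket (ι a) (ι b))
include hbr

lemma rightDenominators_mem_invtSubmodule (x : P) {W : Submodule K D}
    (hW : W ∈ invtSubmodule (BD.bracket (ι x))) :
    rightDenominators ι W ∈ invtSubmodule (B.bracket x) := by
  intro p hp v hv
  obtain ⟨q, hq⟩ := ι.mem_range.mp (hp v hv)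
  have hleib : v * ι (B.bracket x p) = ι (B.bracket x q) - BD.bracket (ι x) v * ι p := by
    rw [hbr, hbr, hq, BD.leibniz]
    abel
  rw [hleib]
  exact sub_mem (ι.mem_range_self _) (hp _ (hW hv))

lemma bracket_mul_inv_eigenvector {x w : P} {μ : K} (hw : B.bracket x w = μ • w)
    (hιw : ι w ≠ 0) (p : P) :
    BD.bracket (ι x) (ι p * (ι w)⁻¹) = ι (B.bracket x p - μ • p) * (ι w)⁻¹ := by
  rw [BD.leibniz, BD.bracket_inv _ hιw, ← hbr, ← hbr, hw, map_sub, map_smul, map_smul, sub_mul,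
    smul_mul_assoc, mul_smul_comm, smul_mul_assoc, inv_mul_cancel₀ hιw, one_mul, mul_neg,
    mul_smul_comm, sub_eq_add_neg]

end Fractions

section FiniteOrbits

variable {K P D : Type*} [Field K] [Ring P] [Algebra K P] [DivisionRing D] [Algebra K D]
  (ι : P →ₐ[K] D) {B : PoissonBracket K P} {BD : PoissonBracket K D}
  (hbr : ∀ a b : P, ι (B.bracket a b) = BD.bracket (ι a) (ι b))
include hbr

lemma finiteDimensional_orbitSpan_mul_inv {x u w : P} {μ : K} (hw : B.bracket x w = μ • w)
    (hιw : ι w ≠ 0) [FiniteDimensional K (orbitSpan (B.bracket x) u)] :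
    FiniteDimensional K (orbitSpan (BD.bracket (ι x)) (ι u * (ι w)⁻¹)) := by
  let S := (orbitSpan (B.bracket x) u).map ((LinearMap.mulRight K (ι w)⁻¹) ∘ₗ ι.toLinearMap)
  have hS : S ∈ invtSubmodule (BD.bracket (ι x)) := by
    rintro _ ⟨p, hp, rfl⟩
    refine ⟨B.bracket x p - μ • p, ?_, (bracket_mul_inv_eigenvector ι hbr hw hιw p).symm⟩
    exact sub_mem (orbitSpan_mem_invtSubmodule _ u hp) (Submodule.smul_mem _ μ hp)
  exact Submodule.finiteDimensional_of_le
    (orbitSpan_le _ hS ⟨u, self_mem_orbitSpan _ u, rfl⟩)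

lemma exists_eigenvector_mem_rightDenominators [IsAlgClosed K] (hinj : Function.Injective ι)
    (hfrac : ∀ z : D, ∃ a b : P, b ≠ 0 ∧ z = ι a * (ι b)⁻¹) {x : P}
    (hF : ∀ y : P, FiniteDimensional K (orbitSpan (B.bracket x) y))
    {W : Submodule K D} [FiniteDimensional K W] (hW : W ∈ invtSubmodule (BD.bracket (ι x))) :
    ∃ (w : P) (μ : K), w ≠ 0 ∧ B.bracket x w = μ • w ∧ w ∈ rightDenominators ι W := by
  obtain ⟨w₀, hw₀, hw₀W⟩ :=
    exists_ne_zero_mem_rightDenominators ι hinj hfrac (W.fg_iff_finiteDimensional.mpr ‹_›)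
  have hle := orbitSpan_le _ (rightDenominators_mem_invtSubmodule ι hbr x hW) hw₀W
  have hne : orbitSpan (B.bracket x) w₀ ≠ ⊥ := fun h =>
    hw₀ (by simpa [h] using self_mem_orbitSpan (B.bracket x) w₀)
  have := hF w₀
  obtain ⟨μ, w, hwS, hw⟩ := exists_hasEigenvector_mem_s10 _ (orbitSpan_mem_invtSubmodule _ w₀) hne
  exact ⟨w, μ, hw.2, hw.apply_eq_smul, hle hwS⟩

end FiniteOrbits

theorem stmt_10_general {K P D : Type*} [Field K] [IsAlgClosed K]
    [Ring P] [Algebra K P]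
    [DivisionRing D] [Algebra K D]
    (B : PoissonBracket K P) (BD : PoissonBracket K D)
    (ι : P →ₐ[K] D) (hinj : Function.Injective ι)
    (hbr : ∀ a b : P, ι (B.bracket a b) = BD.bracket (ι a) (ι b))
    (hfrac : ∀ x : D, ∃ a b : P, b ≠ 0 ∧ x = ι a * (ι b)⁻¹)
    (x : P)
    (hF : ∀ y : P, FiniteDimensional K
      ↥(Submodule.span K (Set.range fun n : ℕ => (B.bracket x ^ n) y))) :
    {z : D | FiniteDimensional K
        ↥(Submodule.span K (Set.range fun n : ℕ => (BD.bracket (ι x) ^ n) z))}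
      = {z : D | ∃ (u w : P) (lam : K),
          w ≠ 0 ∧ B.bracket x w = lam • w ∧ z = ι u * (ι w)⁻¹} := by
  have hιne : ∀ {w : P}, w ≠ 0 → ι w ≠ 0 := (map_ne_zero_iff ι hinj).mpr
  ext z
  constructor
  · intro (hz : FiniteDimensional K (orbitSpan (BD.bracket (ι x)) z))
    obtain ⟨w, μ, hw₀, hw, hwz⟩ := exists_eigenvector_mem_rightDenominators ι hbr hinj hfrac hF
      (W := orbitSpan (BD.bracket (ι x)) z) (orbitSpan_mem_invtSubmodule _ z)
    obtain ⟨u, hu⟩ := ι.mem_range.mp (hwz z (self_mem_orbitSpan _ z))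
    exact ⟨u, w, μ, hw₀, hw, by rw [hu, mul_inv_cancel_right₀ (hιne hw₀)]⟩
  · rintro ⟨u, w, μ, hw₀, hw, rfl⟩
    have : FiniteDimensional K (orbitSpan (B.bracket x) u) := hF u
    exact finiteDimensional_orbitSpan_mul_inv ι hbr hw (hιne hw₀)

/-- If `F(x,P) = P` (every element of `P` generates a finite-dimensional
`K[ad_x]`-module), then the torsion algebra of `x` in the right division ring of
fractions `D` of `P` is exactly `P C⁻¹`, where `C` is the set of nonzero
eigenvectors of `ad_x` in `P`. -/
theorem stmt_10 {K P D : Type*} [Field K] [CharZero K] [IsAlgClosed K]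
    [Ring P] [Algebra K P] [NoZeroDivisors P]
    [DivisionRing D] [Algebra K D]
    (B : PoissonBracket K P) (BD : PoissonBracket K D)
    (ι : P →ₐ[K] D) (hinj : Function.Injective ι)
    (hbr : ∀ a b : P, ι (B.bracket a b) = BD.bracket (ι a) (ι b))
    (hfrac : ∀ x : D, ∃ a b : P, b ≠ 0 ∧ x = ι a * (ι b)⁻¹)
    (x : P)
    (hF : ∀ y : P, FiniteDimensional K
      ↥(Submodule.span K (Set.range fun n : ℕ => (B.bracket x ^ n) y))) :
    {z : D | FiniteDimensional K
        ↥(Submodule.span K (Set.range fun n : ℕ => (BD.bracket (ι x) ^ n) z))}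
      = {z : D | ∃ (u w : P) (lam : K),
          w ≠ 0 ∧ B.bracket x w = lam • w ∧ z = ι u * (ι w)⁻¹} :=
  stmt_10_general B BD ι hinj hbr hfrac x hF
end

section
/- Let P be a non-commutative Poisson algebra over K, (P,·) a right Ore domain with division ring P̃. If x ∈ P is strictly nilpotent (ad_x is locally nilpotent on P, i.e., N(x,P) = P, and x is not central), then F(x,P̃) = N(x,P̃) = P C⁻¹ where C = C(x,P) \ {0} is the set of nonzero elements commuting with x under the bracket. -/
/-- An endomorphism of a finite-dimensional space over an algebraically closed
field whose only eigenvalue is `0` annihilates some power. -/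
lemma aux_nilpotent_of_eigenvalues_zero {K V : Type*} [Field K] [IsAlgClosed K]
    [AddCommGroup V] [Module K V] [FiniteDimensional K V] (f : V →ₗ[K] V)
    (h : ∀ μ : K, Module.End.HasEigenvalue f μ → μ = 0) :
    ∃ d : ℕ, f ^ d = 0 := by
  have hint : IsIntegral K f := Algebra.IsIntegral.isIntegral (R := K) f
  set p := minpoly K f with hp
  have hmon : p.Monic := minpoly.monic hint
  have hsp : p.Splits := IsAlgClosed.splits p
  have hroots : p.roots.map (fun a => Polynomial.X - Polynomial.C a)
      = Multiset.replicate p.roots.card Polynomial.X := by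
    rw [Multiset.eq_replicate]
    refine ⟨Multiset.card_map _ _, ?_⟩
    intro b hb
    obtain ⟨r, hr, rfl⟩ := Multiset.mem_map.mp hb
    have : Module.End.HasEigenvalue f r := by
      rw [Module.End.hasEigenvalue_iff_isRoot]
      exact Polynomial.isRoot_of_mem_roots hr
    rw [h r this, map_zero, sub_zero]
  have hpe : p = Polynomial.X ^ p.roots.card := by
    conv_lhs => rw [hsp.eq_prod_roots_of_monic hmon]
    rw [hroots, Multiset.prod_replicate]
  refine ⟨p.roots.card, ?_⟩
  have h2 := minpoly.aeval K f
  rw [← hp, hpe] at h2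
  simpa using h2

/-- If `x ∈ P` is strictly nilpotent (`ad_x` locally nilpotent on `P`, `x` not
bracket-central), then in the right division ring of fractions `D` of `P` one has
`F(x,D) = N(x,D) = P C⁻¹`, where `C = C(x,P) \ {0}`. -/
theorem stmt_11 {K P D : Type*} [Field K] [CharZero K] [IsAlgClosed K]
    [Ring P] [Algebra K P] [NoZeroDivisors P]
    [DivisionRing D] [Algebra K D]
    (B : PoissonBracket K P) (BD : PoissonBracket K D)
    (ι : P →ₐ[K] D) (hinj : Function.Injective ι)
    (hbr : ∀ a b : P, ι (B.bracket a b) = BD.bracket (ι a) (ι b))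
    (hfrac : ∀ x : D, ∃ a b : P, b ≠ 0 ∧ x = ι a * (ι b)⁻¹)
    (x : P)
    (hN : ∀ y : P, ∃ m : ℕ, (B.bracket x ^ m) y = 0)
    (hnc : ∃ y : P, B.bracket x y ≠ 0) :
    ({z : D | FiniteDimensional K
        ↥(Submodule.span K (Set.range fun n : ℕ => (BD.bracket (ι x) ^ n) z))}
      = {z : D | ∃ m : ℕ, (BD.bracket (ι x) ^ m) z = 0}) ∧
    ({z : D | ∃ m : ℕ, (BD.bracket (ι x) ^ m) z = 0}
      = {z : D | ∃ u w : P, w ≠ 0 ∧ B.bracket x w = 0 ∧ z = ι u * (ι w)⁻¹}) := by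
  classical
  obtain ⟨y₀, hy₀⟩ := hnc
  haveI : Nontrivial P := nontrivial_of_ne _ _ hy₀
  set δ : D →ₗ[K] D := BD.bracket (ι x) with hδdef
  set ad : P →ₗ[K] P := B.bracket x with haddef
  -- basic facts
  have hι0 : ∀ p : P, p ≠ 0 → ι p ≠ 0 := by
    intro p hp h
    exact hp (hinj (by rw [h, map_zero]))
  have hLeib : ∀ a b : D, δ (a * b) = δ a * b + a * δ b := fun a b => BD.leibniz (ι x) a b
  have hδ1 : δ (1 : D) = 0 := by
    have h := hLeib 1 1
    simp only [one_mul, mul_one] at h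
    exact (left_eq_add.mp h)
  have hinv : ∀ c : D, c ≠ 0 → δ c = 0 → δ c⁻¹ = 0 := by
    intro c hc h0
    have h := hLeib c c⁻¹
    rw [mul_inv_cancel₀ hc, hδ1, h0, zero_mul, zero_add] at h
    exact (mul_eq_zero.mp h.symm).resolve_left hc
  have hcomm : ∀ (n : ℕ) (p : P), ι ((ad ^ n) p) = (δ ^ n) (ι p) := by
    intro n
    induction n with
    | zero => intro p; simp
    | succ n ih =>
      intro p
      rw [pow_succ', pow_succ', Module.End.mul_apply, Module.End.mul_apply, ← ih p]
      exact hbr x _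
  have hNd : ∀ p : P, ∃ m : ℕ, (δ ^ m) (ι p) = 0 := by
    intro p
    obtain ⟨m, hm⟩ := hN p
    exact ⟨m, by rw [← hcomm, hm, map_zero]⟩
  have hshift : ∀ (m : ℕ) (d : D), (δ ^ m) d = 0 → ∀ k : ℕ, (δ ^ (m + k)) d = 0 := by
    intro m d h k
    induction k with
    | zero => simpa using h
    | succ k ih => rw [← Nat.add_assoc, pow_succ', Module.End.mul_apply, ih, map_zero]
  have hconst : ∀ c : D, δ c = 0 → ∀ (n : ℕ) (a : D), (δ ^ n) (a * c) = (δ ^ n) a * c := by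
    intro c hc n
    induction n with
    | zero => intro a; simp
    | succ n ih =>
      intro a
      rw [pow_succ, Module.End.mul_apply, Module.End.mul_apply, hLeib, hc, mul_zero, add_zero, ih]
  have hbx1 : ad (1 : P) = 0 := by
    have h := B.leibniz x 1 1
    rw [← haddef] at h
    simp only [one_mul, mul_one] at h
    exact (left_eq_add.mp h)
  -- the second equality: N(x,D) = P C⁻¹
  have key2 : {z : D | ∃ m : ℕ, (δ ^ m) z = 0}
      = {z : D | ∃ u w : P, w ≠ 0 ∧ ad w = 0 ∧ z = ι u * (ι w)⁻¹} := by
    ext z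
    simp only [Set.mem_setOf_eq]
    constructor
    · rintro ⟨m, hm⟩
      induction m generalizing z with
      | zero =>
        rw [pow_zero, Module.End.one_apply] at hm
        exact ⟨0, 1, one_ne_zero, hbx1, by simp [hm]⟩
      | succ m ih =>
        rw [pow_succ, Module.End.mul_apply] at hm
        obtain ⟨u', w', hw'0, hw'b, hzw⟩ := ih (δ z) hm
        have hιw'0 : ι w' ≠ 0 := hι0 w' hw'0
        have hιw' : δ (ι w') = 0 := by
          rw [hδdef, ← hbr, ← haddef, hw'b, map_zero]
        set y := z * ι w' with hy
        have hδy : δ y = ι u' := by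
          rw [hy, hLeib, hιw', mul_zero, add_zero, hzw, mul_assoc,
            inv_mul_cancel₀ hιw'0, mul_one]
        obtain ⟨a, b, hb0, hab⟩ := hfrac y
        have hyb : y * ι b = ι a := by
          rw [hab, mul_assoc, inv_mul_cancel₀ (hι0 b hb0), mul_one]
        -- all the c_j = y * ι (ad^j b) lie in the image of ι
        have hcj : ∀ j : ℕ, ∃ q : P, y * ι ((ad ^ j) b) = ι q := by
          intro j
          induction j with
          | zero => exact ⟨a, by simpa using hyb⟩
          | succ j ihj =>
            obtain ⟨q, hq⟩ := ihj
            refine ⟨ad q - u' * (ad ^ j) b, ?_⟩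
            have e1 : ι ((ad ^ (j + 1)) b) = δ (ι ((ad ^ j) b)) := by
              rw [pow_succ', Module.End.mul_apply]
              exact hbr x _
            have e2 : δ (y * ι ((ad ^ j) b))
                = ι u' * ι ((ad ^ j) b) + y * ι ((ad ^ (j + 1)) b) := by
              rw [hLeib, hδy, e1]
            have e3 : δ (ι q) = ι (ad q) := (hbr x q).symm
            rw [map_sub, ← e3, ← hq, e2, map_mul ι u' ((ad ^ j) b)]
            abel
        -- minimal vanishing index for b
        obtain ⟨n0, hn0⟩ := hN b
        have hfind : ∃ k : ℕ, (ad ^ k) b = 0 := ⟨n0, hn0⟩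
        set n := Nat.find hfind with hn
        have hnpos : n ≠ 0 := by
          intro h
          have hsp := Nat.find_spec hfind
          rw [← hn, h, pow_zero, Module.End.one_apply] at hsp
          exact hb0 hsp
        obtain ⟨j, hj⟩ : ∃ j, n = j + 1 :=
          ⟨n - 1, (Nat.succ_pred_eq_of_pos (Nat.pos_of_ne_zero hnpos)).symm⟩
        have hj1 : (ad ^ (j + 1)) b = 0 := by rw [← hj, hn]; exact Nat.find_spec hfind
        have hj0 : (ad ^ j) b ≠ 0 := Nat.find_min hfind (by omega)
        set w := (ad ^ j) b with hwdef
        have hw : ad w = 0 := by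
          have h := hj1
          rw [pow_succ', Module.End.mul_apply] at h
          exact h
        obtain ⟨u, hu⟩ := hcj j
        refine ⟨u, w' * w, mul_ne_zero hw'0 hj0, ?_, ?_⟩
        · have hlw := B.leibniz x w' w
          rw [← haddef] at hlw
          rw [hlw, hw'b, hw, zero_mul, mul_zero, add_zero]
        · have hy2 : y = ι u * (ι w)⁻¹ := by
            rw [eq_mul_inv_iff_mul_eq₀ (hι0 w hj0)]
            exact hu
          have hz2 : z = y * (ι w')⁻¹ := by
            rw [hy, mul_assoc, mul_inv_cancel₀ hιw'0, mul_one]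
          rw [map_mul, mul_inv_rev, hz2, hy2, mul_assoc]
    · rintro ⟨u, w, hw0, hwb, rfl⟩
      have hιw : δ (ι w) = 0 := by rw [hδdef, ← hbr, ← haddef, hwb, map_zero]
      have hιwinv : δ ((ι w)⁻¹) = 0 := hinv _ (hι0 w hw0) hιw
      obtain ⟨m, hm⟩ := hNd u
      exact ⟨m, by rw [hconst _ hιwinv, hm, zero_mul]⟩
  -- the first equality: F(x,D) = N(x,D)
  have key1 : {z : D | FiniteDimensional K
        ↥(Submodule.span K (Set.range fun n : ℕ => (δ ^ n) z))}
      = {z : D | ∃ m : ℕ, (δ ^ m) z = 0} := by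
    ext z
    simp only [Set.mem_setOf_eq]
    constructor
    · intro hz
      set V := Submodule.span K (Set.range fun n : ℕ => (δ ^ n) z) with hV
      haveI : FiniteDimensional K V := hz
      have hstab : ∀ v ∈ V, δ v ∈ V := by
        intro v hv
        have hmap : Submodule.map δ V ≤ V := by
          rw [hV, Submodule.map_span]
          apply Submodule.span_le.mpr
          rintro _ ⟨_, ⟨n, rfl⟩, rfl⟩
          apply Submodule.subset_span
          exact ⟨n + 1, by show (δ ^ (n + 1)) z = δ ((δ ^ n) z); rw [pow_succ', Module.End.mul_apply]⟩
        exact hmap (Submodule.mem_map_of_mem hv)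
      set f : V →ₗ[K] V := δ.restrict hstab with hf
      have hcoe : ∀ (k : ℕ) (v : V), (((f ^ k) v : V) : D) = (δ ^ k) (v : D) := by
        intro k
        induction k with
        | zero => intro v; simp
        | succ k ih =>
          intro v
          rw [pow_succ', pow_succ', Module.End.mul_apply, Module.End.mul_apply, ← ih v]
          rfl
      -- all eigenvalues of f vanish
      have heig : ∀ μ : K, Module.End.HasEigenvalue f μ → μ = 0 := by
        intro μ hμ
        by_contra hμ0
        obtain ⟨v, hv⟩ := hμ.exists_hasEigenvector
        set vD : D := (v : D) with hvD
        have hvD0 : vD ≠ 0 := by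
          rw [hvD, ne_eq, ZeroMemClass.coe_eq_zero]
          exact hv.2
        have hδv : δ vD = μ • vD := by
          have h2 := congrArg (Subtype.val) hv.apply_eq_smul
          exact (by simpa [hvD] using h2 : ((f v : V) : D) = μ • vD)
        obtain ⟨a, b, hb0, hab⟩ := hfrac vD
        -- each u_i := vD * δ^i(ι b) is locally annihilated by δ
        have hui : ∀ i : ℕ, ∃ m : ℕ, (δ ^ m) (vD * (δ ^ i) (ι b)) = 0 := by
          intro i
          induction i with
          | zero =>
            obtain ⟨m, hm⟩ := hNd a
            refine ⟨m, ?_⟩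
            rw [pow_zero, Module.End.one_apply]
            have hvb : vD * ι b = ι a := by
              rw [hab, mul_assoc, inv_mul_cancel₀ (hι0 b hb0), mul_one]
            rw [hvb, hm]
          | succ i ih =>
            obtain ⟨m, hm⟩ := ih
            have hrel : vD * (δ ^ (i + 1)) (ι b)
                = δ (vD * (δ ^ i) (ι b)) - μ • (vD * (δ ^ i) (ι b)) := by
              rw [hLeib, hδv, smul_mul_assoc, pow_succ', Module.End.mul_apply]
              abel
            refine ⟨m + 1, ?_⟩
            have e1 : (δ ^ (m + 1)) (δ (vD * (δ ^ i) (ι b))) = 0 := by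
              rw [← Module.End.mul_apply, ← pow_succ]
              exact hshift m _ hm 2
            rw [hrel, map_sub, map_smul, e1, hshift m _ hm 1, smul_zero, sub_zero]
        -- minimal vanishing index for ι b
        obtain ⟨n0, hn0⟩ := hNd b
        have hfind : ∃ k : ℕ, (δ ^ k) (ι b) = 0 := ⟨n0, hn0⟩
        set n := Nat.find hfind with hn
        have hnpos : n ≠ 0 := by
          intro h
          have hsp := Nat.find_spec hfind
          rw [← hn, h, pow_zero, Module.End.one_apply] at hsp
          exact hι0 b hb0 hsp
        obtain ⟨j, hj⟩ : ∃ j, n = j + 1 :=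
          ⟨n - 1, (Nat.succ_pred_eq_of_pos (Nat.pos_of_ne_zero hnpos)).symm⟩
        have hj1 : (δ ^ (j + 1)) (ι b) = 0 := by rw [← hj, hn]; exact Nat.find_spec hfind
        have hj0 : (δ ^ j) (ι b) ≠ 0 := Nat.find_min hfind (by omega)
        set e := vD * (δ ^ j) (ι b) with he
        have he0 : e ≠ 0 := mul_ne_zero hvD0 hj0
        have heδ : δ e = μ • e := by
          have hjd : δ ((δ ^ j) (ι b)) = 0 := by
            rw [← Module.End.mul_apply, ← pow_succ']
            exact hj1
          rw [he, hLeib, hδv, smul_mul_assoc, hjd, mul_zero, add_zero]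
        have hepow : ∀ m : ℕ, (δ ^ m) e = μ ^ m • e := by
          intro m
          induction m with
          | zero => simp
          | succ m ih =>
            rw [pow_succ', Module.End.mul_apply, ih, map_smul, heδ, smul_smul, ← pow_succ]
        obtain ⟨m, hm⟩ := hui j
        rw [← he] at hm
        rw [hepow m] at hm
        exact he0 ((smul_eq_zero.mp hm).resolve_left (pow_ne_zero m hμ0))
      obtain ⟨d, hd⟩ := aux_nilpotent_of_eigenvalues_zero f heig
      have hzV : z ∈ V := Submodule.subset_span ⟨0, by simp⟩
      refine ⟨d, ?_⟩
      have hcz := hcoe d ⟨z, hzV⟩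
      rw [hd] at hcz
      simpa using hcz.symm
    · rintro ⟨m, hm⟩
      have hfin : (Set.range fun n : ℕ => (δ ^ n) z).Finite := by
        apply Set.Finite.subset
          (((Set.Iio m).toFinite.image (fun n : ℕ => (δ ^ n) z)).union (Set.finite_singleton 0))
        rintro _ ⟨n, rfl⟩
        by_cases hnm : n < m
        · exact Set.mem_union_left _ ⟨n, hnm, rfl⟩
        · refine Set.mem_union_right _ ?_
          simp only [Set.mem_singleton_iff]
          show (δ ^ n) z = 0
          rw [show n = (n - m) + m by omega, pow_add, Module.End.mul_apply, hm, map_zero]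
      exact FiniteDimensional.span_of_finite K hfin
  exact ⟨key1, key2⟩
end

section
/- Let P₁, P₂ be non-commutative Poisson algebras over K of the same class (both commutative Poisson algebras, or both associative algebras with commutator bracket), with P₁ a domain. Let z₁ ∈ Z(P₁) be central with z₁ ∉ K a non-scalar of positive degree (for a finite discrete degree map u₁ on P₁), and let z₂ ∈ P₂ \ Z(P₂). Set Θ = z₁ ⊗ z₂ ∈ P₁ ⊗ P₂. Then N(Θ) = P₁ ⊗ N(z₂), C(Θ) = P₁ ⊗ C(z₂), F(Θ) = P₁ ⊗ N(z₂), and D(Θ) = P₁ ⊗ C(z₂). -/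
open scoped TensorProduct

/-- A finite discrete degree map on a non-commutative Poisson algebra `P`:
`deg(zw) = deg z + deg w ≥ deg {z,w}`, `deg (z+w) ≤ max`, `deg z = ⊥ ↔ z = 0`,
nonzero elements have nonnegative degree (discreteness), and each filtration
piece `{a | deg a ≤ t}` is a finite-dimensional subspace (finiteness). -/
structure DegreeMap (K P : Type*) [Field K] [Ring P] [Algebra K P]
    (B : PoissonBracket K P) where
  deg : P → WithBot ℤ
  deg_mul : ∀ z w : P, deg (z * w) = deg z + deg w
  deg_bracket : ∀ z w : P, deg (B.bracket z w) ≤ deg z + deg w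
  deg_add : ∀ z w : P, deg (z + w) ≤ max (deg z) (deg w)
  deg_bot : ∀ z : P, deg z = ⊥ ↔ z = 0
  discrete : ∀ z : P, z ≠ 0 → 0 ≤ deg z
  finite : ∀ t : ℤ, ∃ V : Submodule K P,
    (V : Set P) = {a : P | deg a ≤ (t : WithBot ℤ)} ∧ FiniteDimensional K V
open Polynomial in
theorem aux_no_alg {K P : Type*} [Field K] [IsAlgClosed K] [Ring P] [Algebra K P]
    [NoZeroDivisors P] (z : P) (hzK : ∀ c : K, z ≠ algebraMap K P c) :
    ∀ (n : ℕ) (p : K[X]), p.natDegree ≤ n → p ≠ 0 → (aeval z) p ≠ 0 := by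
  have h10 : (1 : P) ≠ 0 := by
    intro h
    apply hzK 0
    rw [map_zero]
    calc z = z * 1 := (mul_one z).symm
    _ = z * 0 := by rw [h]
    _ = 0 := mul_zero z
  have hmapinj : ∀ c : K, c ≠ 0 → algebraMap K P c ≠ 0 := by
    intro c hc h
    apply h10
    have h2 : (1 : P) = algebraMap K P c⁻¹ * algebraMap K P c := by
      rw [← map_mul, inv_mul_cancel₀ hc, map_one]
    rw [h2, h, mul_zero]
  intro n
  induction n with
  | zero =>
    intro p hd hp0 hval
    rw [eq_C_of_natDegree_le_zero hd] at hval hp0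
    rw [aeval_C] at hval
    exact hmapinj _ (fun h => hp0 (by rw [h, map_zero])) hval
  | succ n ih =>
    intro p hd hp0 hval
    by_cases hle : p.natDegree ≤ n
    · exact ih p hle hp0 hval
    have hpos : 0 < p.natDegree := by omega
    have hdeg : p.degree ≠ 0 := by
      rw [degree_eq_natDegree hp0]
      exact_mod_cast Nat.pos_iff_ne_zero.mp hpos
    obtain ⟨α, hα⟩ := IsAlgClosed.exists_root p hdeg
    obtain ⟨q, hq⟩ := dvd_iff_isRoot.mpr hα
    have hXsub : (X - C α) ≠ 0 := X_sub_C_ne_zero α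
    have hq0 : q ≠ 0 := fun h => hp0 (by rw [hq, h, mul_zero])
    have hqd : q.natDegree ≤ n := by
      have h3 := natDegree_mul hXsub hq0
      rw [← hq, natDegree_X_sub_C] at h3
      omega
    have h4 : aeval z p = (z - algebraMap K P α) * aeval z q := by
      rw [hq, map_mul, map_sub, aeval_X, aeval_C]
    rw [h4] at hval
    rcases mul_eq_zero.mp hval with h | h
    · exact hzK α (by rwa [sub_eq_zero] at h)
    · exact ih q hqd hq0 h

theorem aux_deg_one_elt {K P : Type*} [Field K] [Ring P] [Algebra K P]
    {B : PoissonBracket K P} (u : DegreeMap K P B) (h10 : (1 : P) ≠ 0) :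
    u.deg 1 = 0 := by
  have a := u.deg_mul 1 1
  rw [one_mul] at a
  have hne : u.deg 1 ≠ ⊥ := fun h => h10 ((u.deg_bot 1).mp h)
  obtain ⟨d, hd⟩ := WithBot.ne_bot_iff_exists.mp hne
  rw [← hd] at a ⊢
  have h1 : d = d + d := by exact_mod_cast a
  have h2 : d = 0 := by omega
  rw [h2]
  rfl

theorem aux_deg_algebraMap {K P : Type*} [Field K] [Ring P] [Algebra K P]
    {B : PoissonBracket K P} (u : DegreeMap K P B) (h10 : (1 : P) ≠ 0)
    (c : K) (hc : c ≠ 0) : u.deg (algebraMap K P c) = 0 := by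
  have hmapinj : ∀ e : K, e ≠ 0 → algebraMap K P e ≠ 0 := by
    intro e he h
    apply h10
    have h2 : (1 : P) = algebraMap K P e⁻¹ * algebraMap K P e := by
      rw [← map_mul, inv_mul_cancel₀ he, map_one]
    rw [h2, h, mul_zero]
  have h1 : algebraMap K P c * algebraMap K P c⁻¹ = 1 := by
    rw [← map_mul, mul_inv_cancel₀ hc, map_one]
  have ha := u.deg_mul (algebraMap K P c) (algebraMap K P c⁻¹)
  rw [h1, aux_deg_one_elt u h10] at ha
  have hx := u.discrete _ (hmapinj c hc)
  have hy := u.discrete _ (hmapinj c⁻¹ (inv_ne_zero hc))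
  have hxb : u.deg (algebraMap K P c) ≠ ⊥ := fun h => (hmapinj c hc) ((u.deg_bot _).mp h)
  have hyb : u.deg (algebraMap K P c⁻¹) ≠ ⊥ :=
    fun h => (hmapinj c⁻¹ (inv_ne_zero hc)) ((u.deg_bot _).mp h)
  obtain ⟨x, hxe⟩ := WithBot.ne_bot_iff_exists.mp hxb
  obtain ⟨y, hye⟩ := WithBot.ne_bot_iff_exists.mp hyb
  rw [← hxe] at hx ⊢
  rw [← hye] at hy
  rw [← hxe, ← hye] at ha
  have hx' : (0:ℤ) ≤ x := by exact_mod_cast hx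
  have hy' : (0:ℤ) ≤ y := by exact_mod_cast hy
  have hxy : (0:ℤ) = x + y := by exact_mod_cast ha
  have : x = 0 := by omega
  rw [this]
  rfl

theorem aux_deg_smul {K P : Type*} [Field K] [Ring P] [Algebra K P]
    {B : PoissonBracket K P} (u : DegreeMap K P B) (h10 : (1 : P) ≠ 0)
    (c : K) (hc : c ≠ 0) (v : P) : u.deg (c • v) = u.deg v := by
  rw [Algebra.smul_def, u.deg_mul, aux_deg_algebraMap u h10 c hc, zero_add]

open Polynomial in
theorem aux_deg_z_one {K P : Type*} [Field K] [IsAlgClosed K] [Ring P] [Algebra K P]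
    [NoZeroDivisors P] {B : PoissonBracket K P} (u : DegreeMap K P B) (z : P)
    (hzK : ∀ c : K, z ≠ algebraMap K P c) : ((1:ℤ) : WithBot ℤ) ≤ u.deg z := by
  classical
  have hz0 : z ≠ 0 := fun h => hzK 0 (by rw [map_zero, h])
  have h10 : (1 : P) ≠ 0 := by
    intro h
    apply hzK 0
    rw [map_zero]
    calc z = z * 1 := (mul_one z).symm
    _ = z * 0 := by rw [h]
    _ = 0 := mul_zero z
  by_contra hlt
  have h0 : (0 : WithBot ℤ) ≤ u.deg z := u.discrete z hz0
  have hne : u.deg z ≠ ⊥ := fun h => hz0 ((u.deg_bot z).mp h)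
  obtain ⟨d, hd⟩ := WithBot.ne_bot_iff_exists.mp hne
  have hdz : u.deg z = 0 := by
    have h1 : (0:ℤ) ≤ d := by rw [← hd] at h0; exact_mod_cast h0
    have h2 : ¬ ((1:ℤ) ≤ d) := fun h => hlt (by rw [← hd]; exact_mod_cast h)
    have h3 : d = 0 := by omega
    rw [← hd, h3]
    rfl
  have hpow : ∀ n : ℕ, u.deg (z ^ n) ≤ 0 := by
    intro n
    induction n with
    | zero => rw [pow_zero, aux_deg_one_elt u h10]
    | succ n ih => rw [pow_succ, u.deg_mul, hdz, add_zero]; exact ih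
  obtain ⟨V, hV, hfin⟩ := u.finite 0
  have hmem : ∀ n : ℕ, z ^ n ∈ V := by
    intro n
    have : z ^ n ∈ (V : Set P) := by rw [hV]; exact hpow n
    exact this
  haveI := hfin
  set D := Module.finrank K V with hD
  have hnli : ¬ LinearIndependent K (fun i : Fin (D+1) => (⟨z ^ (i:ℕ), hmem i⟩ : V)) := by
    intro hli
    have h5 := hli.fintype_card_le_finrank
    rw [Fintype.card_fin] at h5
    omega
  obtain ⟨c, hsum, i₀, hi₀⟩ := Fintype.not_linearIndependent_iff.mp hnli
  have hsum' : ∑ i : Fin (D+1), c i • z ^ (i:ℕ) = 0 := by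
    have h6 := congrArg (Subtype.val) hsum
    simpa using h6
  set p : K[X] := ∑ i : Fin (D+1), Polynomial.monomial (i:ℕ) (c i) with hp
  have hpne : p ≠ 0 := by
    intro h
    apply hi₀
    have h7 : p.coeff (i₀:ℕ) = 0 := by rw [h]; simp
    rw [hp, Polynomial.finset_sum_coeff, Finset.sum_eq_single i₀] at h7
    · simpa [Polynomial.coeff_monomial] using h7
    · intro b _ hb
      rw [Polynomial.coeff_monomial, if_neg (fun h => hb (Fin.ext h))]
    · simp
  have hpval : Polynomial.aeval z p = 0 := by
    rw [hp, map_sum, ← hsum']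
    congr 1
    funext i
    rw [Polynomial.aeval_monomial, Algebra.smul_def]
  exact aux_no_alg z hzK p.natDegree p le_rfl hpne hpval
set_option maxHeartbeats 1000000 in
/-- For `Θ = z₁ ⊗ z₂` with `z₁` central, `z₁ ∉ K`, and `z₂` non-central:
`N(Θ) = F(Θ) = P₁ ⊗ N(z₂)` and `C(Θ) = D(Θ) = P₁ ⊗ C(z₂)`. -/
theorem stmt_14 {K P₁ P₂ : Type*} [Field K] [CharZero K] [IsAlgClosed K]
    [Ring P₁] [Algebra K P₁] [NoZeroDivisors P₁] [Ring P₂] [Algebra K P₂]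
    (B₁ : PoissonBracket K P₁) (B₂ : PoissonBracket K P₂)
    (B : PoissonBracket K (P₁ ⊗[K] P₂))
    (hB : ∀ (a₁ b₁ : P₁) (a₂ b₂ : P₂),
      B.bracket (a₁ ⊗ₜ[K] a₂) (b₁ ⊗ₜ[K] b₂)
        = (b₁ * a₁) ⊗ₜ[K] B₂.bracket a₂ b₂ + B₁.bracket a₁ b₁ ⊗ₜ[K] (a₂ * b₂))
    (u₁ : DegreeMap K P₁ B₁) (u₂ : DegreeMap K P₂ B₂)
    (z₁ : P₁) (z₂ : P₂)
    (hz₁br : ∀ y : P₁, B₁.bracket z₁ y = 0)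
    (hz₁mul : ∀ y : P₁, z₁ * y = y * z₁)
    (hz₁K : ∀ c : K, z₁ ≠ algebraMap K P₁ c)
    (hz₂ : ∃ y : P₂, B₂.bracket z₂ y ≠ 0) :
    ({T : P₁ ⊗[K] P₂ | ∃ m : ℕ, (B.bracket (z₁ ⊗ₜ[K] z₂) ^ m) T = 0}
        = ↑(Submodule.span K {T : P₁ ⊗[K] P₂ | ∃ (v : P₁) (w : P₂),
            (∃ m : ℕ, (B₂.bracket z₂ ^ m) w = 0) ∧ T = v ⊗ₜ[K] w})) ∧
    ({T : P₁ ⊗[K] P₂ | B.bracket (z₁ ⊗ₜ[K] z₂) T = 0}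
        = ↑(Submodule.span K {T : P₁ ⊗[K] P₂ | ∃ (v : P₁) (w : P₂),
            B₂.bracket z₂ w = 0 ∧ T = v ⊗ₜ[K] w})) ∧
    ({T : P₁ ⊗[K] P₂ | FiniteDimensional K
          ↥(Submodule.span K (Set.range fun n : ℕ => (B.bracket (z₁ ⊗ₜ[K] z₂) ^ n) T))}
        = ↑(Submodule.span K {T : P₁ ⊗[K] P₂ | ∃ (v : P₁) (w : P₂),
            (∃ m : ℕ, (B₂.bracket z₂ ^ m) w = 0) ∧ T = v ⊗ₜ[K] w})) ∧
    ((Submodule.span K {T : P₁ ⊗[K] P₂ | ∃ lam : K,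
          T ≠ 0 ∧ B.bracket (z₁ ⊗ₜ[K] z₂) T = lam • T} : Set (P₁ ⊗[K] P₂))
        = ↑(Submodule.span K {T : P₁ ⊗[K] P₂ | ∃ (v : P₁) (w : P₂),
            B₂.bracket z₂ w = 0 ∧ T = v ⊗ₜ[K] w})) := by
  classical
  have h10 : (1 : P₁) ≠ 0 := by
    intro h
    apply hz₁K 0
    rw [map_zero]
    calc z₁ = z₁ * 1 := (mul_one z₁).symm
    _ = z₁ * 0 := by rw [h]
    _ = 0 := mul_zero z₁
  have hz₁0 : z₁ ≠ 0 := fun h => hz₁K 0 (by rw [map_zero, h])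
  set ad : (P₁ ⊗[K] P₂) →ₗ[K] (P₁ ⊗[K] P₂) := B.bracket (z₁ ⊗ₜ[K] z₂) with had
  set ad₂ : P₂ →ₗ[K] P₂ := B₂.bracket z₂ with had₂
  have keyA : ∀ (v : P₁) (w : P₂), ad (v ⊗ₜ[K] w) = (v * z₁) ⊗ₜ[K] (ad₂ w) := by
    intro v w
    rw [had, had₂, hB, hz₁br v, TensorProduct.zero_tmul, add_zero]
  have keyA' : ∀ (m : ℕ) (v : P₁) (w : P₂),
      (ad ^ m) (v ⊗ₜ[K] w) = (v * z₁ ^ m) ⊗ₜ[K] ((ad₂ ^ m) w) := by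
    intro m
    induction m with
    | zero => intro v w; simp
    | succ m ih =>
      intro v w
      rw [pow_succ ad m, Module.End.mul_apply, keyA, ih, pow_succ ad₂ m,
        Module.End.mul_apply, pow_succ' z₁ m, ← mul_assoc]
  have facHm : ∀ m : ℕ, (ad ^ m) =
      (LinearMap.rTensor P₂ (LinearMap.mulRight K (z₁ ^ m))).comp
        (LinearMap.lTensor P₁ (ad₂ ^ m)) := by
    intro m
    apply TensorProduct.ext'
    intro v w
    rw [LinearMap.comp_apply, LinearMap.lTensor_tmul, LinearMap.rTensor_tmul,
        keyA' m, LinearMap.mulRight_apply]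
  have hmrinj : ∀ m : ℕ, Function.Injective (LinearMap.mulRight K (z₁ ^ m)) := by
    intro m x y hxy
    have h1 : (x - y) * z₁ ^ m = 0 := by
      rw [sub_mul]
      simpa [LinearMap.mulRight_apply] using sub_eq_zero.mpr hxy
    rcases mul_eq_zero.mp h1 with h | h
    · exact sub_eq_zero.mp h
    · exact absurd h (pow_ne_zero m hz₁0)
  have Rinj : ∀ m : ℕ, Function.Injective
      (LinearMap.rTensor P₂ (LinearMap.mulRight K (z₁ ^ m))) :=
    fun m => Module.Flat.rTensor_preserves_injective_linearMap _ (hmrinj m)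
  have kerPow : ∀ (m : ℕ) (T : P₁ ⊗[K] P₂),
      (ad ^ m) T = 0 ↔ (LinearMap.lTensor P₁ (ad₂ ^ m)) T = 0 := by
    intro m T
    rw [facHm m, LinearMap.comp_apply]
    constructor
    · intro h
      apply Rinj m
      rw [map_zero]
      exact h
    · intro h
      rw [h, map_zero]
  have kerT : ∀ (f : P₂ →ₗ[K] P₂) (T : P₁ ⊗[K] P₂), LinearMap.lTensor P₁ f T = 0 →
      ∃ S : Finset (P₁ × (LinearMap.ker f)), T = ∑ p ∈ S, p.1 ⊗ₜ[K] (p.2 : P₂) := by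
    intro f T hT
    have hex := Module.Flat.lTensor_exact P₁ (LinearMap.exact_subtype_ker_map f)
    obtain ⟨S₀, hS₀⟩ := (hex T).mp hT
    obtain ⟨S, hS⟩ := TensorProduct.exists_finset S₀
    refine ⟨S, ?_⟩
    rw [← hS₀, hS, map_sum]
    simp [LinearMap.lTensor_tmul]
  -- no nonzero eigenvalues
  have lemD : ∀ (T : P₁ ⊗[K] P₂) (lam : K), T ≠ 0 → ad T = lam • T → lam = 0 := by
    intro T lam hT0 hE
    by_contra hlam
    have hpow : ∀ n : ℕ, (ad ^ n) T = lam ^ n • T := by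
      intro n
      induction n with
      | zero => simp
      | succ n ih =>
        rw [pow_succ ad n, Module.End.mul_apply, hE, map_smul, ih, smul_smul,
          ← pow_succ' lam n]
    obtain ⟨S, hS⟩ := TensorProduct.exists_finset T
    let b := Module.Basis.ofVectorSpace K P₂
    let e : (P₁ ⊗[K] P₂) ≃ₗ[K] (_ →₀ P₁) :=
      (TensorProduct.congr (LinearEquiv.refl K P₁) b.repr).trans
        (TensorProduct.finsuppScalarRight K K P₁ _)
    have he : ∀ (v : P₁) (w : P₂) j, e (v ⊗ₜ[K] w) j = b.repr w j • v := by
      intro v w j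
      simp [e, TensorProduct.congr_tmul,
        TensorProduct.finsuppScalarRight_apply_tmul_apply]
    have hTj : ∃ j, e T j ≠ 0 := by
      by_contra hc
      push_neg at hc
      exact hT0 ((LinearEquiv.map_eq_zero_iff e).mp (Finsupp.ext hc))
    obtain ⟨j, hj⟩ := hTj
    have hkey : ∀ n : ℕ, ∃ s : P₁, lam ^ n • (e T j) = s * z₁ ^ n := by
      intro n
      refine ⟨∑ p ∈ S, b.repr ((ad₂ ^ n) p.2) j • p.1, ?_⟩
      have h1 : (ad ^ n) T = ∑ p ∈ S, (p.1 * z₁ ^ n) ⊗ₜ[K] ((ad₂ ^ n) p.2) := by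
        rw [hS, map_sum]
        exact Finset.sum_congr rfl (fun p _ => keyA' n p.1 p.2)
      have h2 : e ((ad ^ n) T) j = lam ^ n • (e T j) := by
        rw [hpow n, map_smul]
        rfl
      rw [← h2, h1, map_sum, Finsupp.finset_sum_apply, Finset.sum_mul]
      refine Finset.sum_congr rfl (fun p _ => ?_)
      rw [he, smul_mul_assoc]
    have hdzn : ∀ n : ℕ, ((n : ℤ) : WithBot ℤ) ≤ u₁.deg (z₁ ^ n) := by
      intro n
      induction n with
      | zero => rw [pow_zero, aux_deg_one_elt u₁ h10]; exact le_refl 0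
      | succ n ih =>
        rw [pow_succ, u₁.deg_mul]
        calc ((((n : ℕ) + 1 : ℕ) : ℤ) : WithBot ℤ)
            = ((n : ℤ) : WithBot ℤ) + ((1 : ℤ) : WithBot ℤ) := by
              push_cast
              rfl
        _ ≤ u₁.deg (z₁ ^ n) + u₁.deg z₁ :=
            add_le_add ih (aux_deg_z_one u₁ z₁ hz₁K)
    have hled : ∀ n : ℕ, ((n : ℤ) : WithBot ℤ) ≤ u₁.deg (e T j) := by
      intro n
      obtain ⟨s, hs⟩ := hkey n
      have hs0 : s ≠ 0 := by
        intro h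
        rw [h, zero_mul] at hs
        rcases smul_eq_zero.mp hs with h' | h'
        · exact pow_ne_zero n hlam h'
        · exact hj h'
      have h4 : u₁.deg (e T j) = u₁.deg s + u₁.deg (z₁ ^ n) := by
        rw [← aux_deg_smul u₁ h10 (lam ^ n) (pow_ne_zero n hlam) (e T j), hs, u₁.deg_mul]
      rw [h4]
      calc ((n : ℤ) : WithBot ℤ) = 0 + ((n : ℤ) : WithBot ℤ) := (zero_add _).symm
      _ ≤ u₁.deg s + u₁.deg (z₁ ^ n) := add_le_add (u₁.discrete s hs0) (hdzn n)
    have hvb : u₁.deg (e T j) ≠ ⊥ := fun h => hj ((u₁.deg_bot _).mp h)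
    obtain ⟨d, hd⟩ := WithBot.ne_bot_iff_exists.mp hvb
    have h5 := hled (d.toNat + 1)
    rw [← hd] at h5
    have h6 : ((d.toNat + 1 : ℕ) : ℤ) ≤ d := by exact_mod_cast h5
    omega
  -- Goal 1
  have hG1 : {T : P₁ ⊗[K] P₂ | ∃ m : ℕ, (ad ^ m) T = 0}
      = ↑(Submodule.span K {T : P₁ ⊗[K] P₂ | ∃ (v : P₁) (w : P₂),
          (∃ m : ℕ, (ad₂ ^ m) w = 0) ∧ T = v ⊗ₜ[K] w}) := by
    apply Set.Subset.antisymm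
    · rintro T ⟨m, hm⟩
      obtain ⟨S, hS⟩ := kerT (ad₂ ^ m) T ((kerPow m T).mp hm)
      rw [hS]
      apply Submodule.sum_mem
      intro p _
      exact Submodule.subset_span ⟨p.1, (p.2 : P₂), ⟨m, LinearMap.mem_ker.mp p.2.2⟩, rfl⟩
    · intro T hT
      refine Submodule.span_induction (p := fun x _ => ∃ m : ℕ, (ad ^ m) x = 0)
        ?_ ?_ ?_ ?_ hT
      · rintro x ⟨v, w, ⟨m, hw⟩, rfl⟩
        exact ⟨m, by rw [keyA' m, hw, TensorProduct.tmul_zero]⟩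
      · exact ⟨0, by simp⟩
      · rintro x y hx hy ⟨m1, h1⟩ ⟨m2, h2⟩
        refine ⟨m1 + m2, ?_⟩
        have e1 : (ad ^ (m1 + m2)) x = (ad ^ m2) ((ad ^ m1) x) := by
          rw [add_comm m1 m2, pow_add, Module.End.mul_apply]
        have e2 : (ad ^ (m1 + m2)) y = (ad ^ m1) ((ad ^ m2) y) := by
          rw [pow_add, Module.End.mul_apply]
        rw [map_add, e1, e2, h1, h2, map_zero, map_zero, add_zero]
      · rintro a x hx ⟨m, hm⟩
        exact ⟨m, by rw [map_smul, hm, smul_zero]⟩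
  -- Goal 2
  have hG2 : {T : P₁ ⊗[K] P₂ | ad T = 0}
      = ↑(Submodule.span K {T : P₁ ⊗[K] P₂ | ∃ (v : P₁) (w : P₂),
          ad₂ w = 0 ∧ T = v ⊗ₜ[K] w}) := by
    apply Set.Subset.antisymm
    · intro T hT
      have hm : (ad ^ 1) T = 0 := by rw [pow_one]; exact hT
      have h1 := (kerPow 1 T).mp hm
      rw [pow_one] at h1
      obtain ⟨S, hS⟩ := kerT ad₂ T h1
      rw [hS]
      exact Submodule.sum_mem _ (fun p _ =>
        Submodule.subset_span ⟨p.1, (p.2 : P₂), LinearMap.mem_ker.mp p.2.2, rfl⟩)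
    · intro T hT
      have hle : Submodule.span K {T : P₁ ⊗[K] P₂ | ∃ (v : P₁) (w : P₂),
          ad₂ w = 0 ∧ T = v ⊗ₜ[K] w} ≤ LinearMap.ker ad := by
        rw [Submodule.span_le]
        rintro x ⟨v, w, hw, rfl⟩
        rw [SetLike.mem_coe, LinearMap.mem_ker, keyA, hw, TensorProduct.tmul_zero]
      exact hle hT
  -- Goal 3
  have hG3 : {T : P₁ ⊗[K] P₂ | FiniteDimensional K
        ↥(Submodule.span K (Set.range fun n : ℕ => (ad ^ n) T))}
      = ↑(Submodule.span K {T : P₁ ⊗[K] P₂ | ∃ (v : P₁) (w : P₂),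
          (∃ m : ℕ, (ad₂ ^ m) w = 0) ∧ T = v ⊗ₜ[K] w}) := by
    rw [← hG1]
    ext T
    simp only [Set.mem_setOf_eq]
    constructor
    · intro hfd
      haveI := hfd
      have hmaps : ∀ x ∈ Submodule.span K (Set.range fun n : ℕ => (ad ^ n) T),
          ad x ∈ Submodule.span K (Set.range fun n : ℕ => (ad ^ n) T) := by
        intro x hx
        refine Submodule.span_induction (p := fun x _ =>
          ad x ∈ Submodule.span K (Set.range fun n : ℕ => (ad ^ n) T)) ?_ ?_ ?_ ?_ hx
        · rintro y ⟨n, rfl⟩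
          apply Submodule.subset_span
          refine ⟨n + 1, ?_⟩
          show (ad ^ (n + 1)) T = ad ((ad ^ n) T)
          rw [pow_succ' ad n, Module.End.mul_apply]
        · show ad 0 ∈ _
          rw [map_zero]; exact Submodule.zero_mem _
        · intro x y hx' hy' hax hay
          show ad (x + y) ∈ _
          rw [map_add]; exact Submodule.add_mem _ hax hay
        · intro a x hx' hax
          show ad (a • x) ∈ _
          rw [map_smul]; exact Submodule.smul_mem _ a hax
      set V := Submodule.span K (Set.range fun n : ℕ => (ad ^ n) T) with hVdef
      set f : V →ₗ[K] V := ad.restrict hmaps with hfdef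
      have hcoe : ∀ (k : ℕ) (x : V), (((f ^ k) x : V) : P₁ ⊗[K] P₂)
          = (ad ^ k) (x : P₁ ⊗[K] P₂) := by
        intro k
        induction k with
        | zero => intro x; rfl
        | succ k ih =>
          intro x
          rw [pow_succ f k, Module.End.mul_apply, ih (f x), pow_succ ad k,
            Module.End.mul_apply, LinearMap.restrict_coe_apply]
      have hroots : ∀ μ ∈ (minpoly K f).roots, μ = 0 := by
        intro μ hμ
        have hir : (minpoly K f).IsRoot μ := (Polynomial.mem_roots'.mp hμ).2
        have hev := Module.End.hasEigenvalue_of_isRoot hir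
        obtain ⟨x, hx⟩ := hev.exists_hasEigenvector
        have hx1 : f x = μ • x := hx.apply_eq_smul
        have hx2 : ad (x : P₁ ⊗[K] P₂) = μ • (x : P₁ ⊗[K] P₂) := by
          have h7 := congrArg Subtype.val hx1
          rw [LinearMap.restrict_coe_apply] at h7
          simpa using h7
        exact lemD (x : P₁ ⊗[K] P₂) μ
          (fun h => hx.2 (by exact_mod_cast ZeroMemClass.coe_eq_zero.mp h)) hx2
      have hint : IsIntegral K f := Algebra.IsIntegral.isIntegral (R := K) f
      have hmonic := minpoly.monic hint
      have hsplit : (minpoly K f).Splits :=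
        IsAlgClosed.splits (minpoly K f)
      have hpe : minpoly K f = Polynomial.X ^ (minpoly K f).roots.card := by
        conv_lhs => rw [hsplit.eq_prod_roots_of_monic hmonic]
        have h2 : (minpoly K f).roots.map (fun a => Polynomial.X - Polynomial.C a)
            = (minpoly K f).roots.map (fun _ => (Polynomial.X : Polynomial K)) :=
          Multiset.map_congr rfl (fun a ha => by rw [hroots a ha, map_zero, sub_zero])
        rw [h2, Multiset.map_const', Multiset.prod_replicate]
      have hfk : f ^ (minpoly K f).roots.card = 0 := by
        have h3 := minpoly.aeval K f
        rw [hpe, map_pow, Polynomial.aeval_X] at h3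
        exact h3
      have hTV : T ∈ V := Submodule.subset_span ⟨0, by simp⟩
      refine ⟨(minpoly K f).roots.card, ?_⟩
      have h5 := hcoe (minpoly K f).roots.card ⟨T, hTV⟩
      rw [hfk] at h5
      simpa using h5.symm
    · rintro ⟨m, hm⟩
      have hle : Submodule.span K (Set.range fun n : ℕ => (ad ^ n) T) ≤
          Submodule.span K
            (((Finset.range m).image (fun n => (ad ^ n) T) : Finset (P₁ ⊗[K] P₂))
              : Set (P₁ ⊗[K] P₂)) := by
        rw [Submodule.span_le]
        rintro y ⟨n, rfl⟩
        show (ad ^ n) T ∈ _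
        by_cases hn : n < m
        · apply Submodule.subset_span
          simp only [Finset.coe_image, Set.mem_image, Finset.mem_coe, Finset.mem_range]
          exact ⟨n, hn, rfl⟩
        · have h0 : (ad ^ n) T = 0 := by
            have e3 : (ad ^ n) T = (ad ^ (n - m)) ((ad ^ m) T) := by
              rw [← Module.End.mul_apply, ← pow_add,
                Nat.sub_add_cancel (Nat.le_of_not_lt hn)]
            rw [e3, hm, map_zero]
          rw [h0]
          exact Submodule.zero_mem _
      exact Submodule.finiteDimensional_of_le hle
  -- Goal 4
  have hG4 : (Submodule.span K {T : P₁ ⊗[K] P₂ | ∃ lam : K,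
        T ≠ 0 ∧ ad T = lam • T} : Set (P₁ ⊗[K] P₂))
      = ↑(Submodule.span K {T : P₁ ⊗[K] P₂ | ∃ (v : P₁) (w : P₂),
          ad₂ w = 0 ∧ T = v ⊗ₜ[K] w}) := by
    have heq : Submodule.span K {T : P₁ ⊗[K] P₂ | ∃ lam : K, T ≠ 0 ∧ ad T = lam • T}
        = Submodule.span K {T : P₁ ⊗[K] P₂ | ∃ (v : P₁) (w : P₂),
            ad₂ w = 0 ∧ T = v ⊗ₜ[K] w} := by
      apply le_antisymm
      · rw [Submodule.span_le]
        rintro T ⟨lam, hT0, hE⟩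
        have h0 : lam = 0 := lemD T lam hT0 hE
        rw [h0, zero_smul] at hE
        have hmem : T ∈ {T : P₁ ⊗[K] P₂ | ad T = 0} := hE
        rw [hG2] at hmem
        exact hmem
      · rw [Submodule.span_le]
        rintro T ⟨v, w, hw, rfl⟩
        by_cases h0 : v ⊗ₜ[K] w = 0
        · rw [h0]
          exact Submodule.zero_mem _
        · exact Submodule.subset_span
            ⟨0, h0, by rw [keyA, hw, TensorProduct.tmul_zero, zero_smul]⟩
    rw [heq]
  exact ⟨hG1, hG2, hG3, hG4⟩
end

section
/- Let P₁, P₂ be non-commutative Poisson algebras of the same class over K with finite discrete degree maps. For z₁ ∈ P₁, z₂ ∈ P₂ and Γ = z₁ ⊗ 1 + 1 ⊗ z₂ ∈ P₁ ⊗ P₂, one has F(Γ) = F(z₁) ⊗ F(z₂), where F(z) = {x : dim_K K[ad_z](x) < ∞}. -/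
open scoped TensorProduct

namespace Stmt16Aux

open Submodule LinearMap

variable {K M N : Type*} [Field K] [AddCommGroup M] [Module K M]
  [AddCommGroup N] [Module K N]

/-- Right contraction `1 ⊗ φ : M ⊗ N → M`. -/
noncomputable def ctR (φ : N →ₗ[K] K) : M ⊗[K] N →ₗ[K] M :=
  (TensorProduct.rid K M).toLinearMap ∘ₗ LinearMap.lTensor M φ

@[simp] lemma ctR_tmul (φ : N →ₗ[K] K) (a : M) (b : N) :
    ctR φ (a ⊗ₜ[K] b) = φ b • a := by
  simp [ctR]

/-- Left contraction `ψ ⊗ 1 : M ⊗ N → N`. -/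
noncomputable def ctL (ψ : M →ₗ[K] K) : M ⊗[K] N →ₗ[K] N :=
  (TensorProduct.lid K N).toLinearMap ∘ₗ LinearMap.rTensor N ψ

@[simp] lemma ctL_tmul (ψ : M →ₗ[K] K) (a : M) (b : N) :
    ctL ψ (a ⊗ₜ[K] b) = ψ a • b := by
  simp [ctL]

/-- The span of the orbit of `x` under `f`. -/
noncomputable def orb (f : Module.End K M) (x : M) : Submodule K M :=
  Submodule.span K (Set.range fun n : ℕ => (f ^ n) x)

lemma self_mem_orb (f : Module.End K M) (x : M) : x ∈ orb f x :=
  Submodule.subset_span ⟨0, by simp⟩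

lemma apply_mem_orb (f : Module.End K M) (x : M) {y : M} (hy : y ∈ orb f x) :
    f y ∈ orb f x := by
  induction hy using Submodule.span_induction with
  | mem y hy =>
      obtain ⟨n, rfl⟩ := hy
      refine Submodule.subset_span ⟨n + 1, ?_⟩
      show (f ^ (n + 1)) x = f ((f ^ n) x)
      rw [pow_succ', Module.End.mul_apply]
  | zero => simp [orb]
  | add u v _ _ hu hv => rw [map_add]; exact add_mem hu hv
  | smul c u _ hu => rw [map_smul]; exact smul_mem _ _ hu

lemma fd_orb_of_invariant (f : Module.End K M) (x : M) (V : Submodule K M)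
    [FiniteDimensional K V] (hx : x ∈ V) (hinv : ∀ y ∈ V, f y ∈ V) :
    FiniteDimensional K (orb f x) := by
  have h : orb f x ≤ V := by
    rw [orb, Submodule.span_le]
    rintro _ ⟨n, rfl⟩
    induction n with
    | zero => simpa using hx
    | succ n ih =>
        show (f ^ (n + 1)) x ∈ V
        rw [pow_succ', Module.End.mul_apply]
        exact hinv _ ih
  exact Submodule.finiteDimensional_of_le h

lemma fd_orb_zero (f : Module.End K M) : FiniteDimensional K (orb f 0) := by
  refine fd_orb_of_invariant f 0 ⊥ (Submodule.zero_mem _) ?_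
  intro y hy
  rw [Submodule.mem_bot] at hy
  simp [hy]

lemma fd_orb_add (f : Module.End K M) {x y : M}
    (hx : FiniteDimensional K (orb f x)) (hy : FiniteDimensional K (orb f y)) :
    FiniteDimensional K (orb f (x + y)) := by
  have : FiniteDimensional K ↥(orb f x ⊔ orb f y) := Submodule.finiteDimensional_sup _ _
  refine fd_orb_of_invariant f (x + y) (orb f x ⊔ orb f y) ?_ ?_
  · exact Submodule.add_mem_sup (self_mem_orb f x) (self_mem_orb f y)
  · intro u hu
    rw [Submodule.mem_sup] at hu
    obtain ⟨a, ha, b, hb, rfl⟩ := hu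
    rw [map_add]
    exact Submodule.add_mem_sup (apply_mem_orb f x ha) (apply_mem_orb f y hb)

lemma fd_orb_smul (f : Module.End K M) {x : M} (c : K)
    (hx : FiniteDimensional K (orb f x)) :
    FiniteDimensional K (orb f (c • x)) :=
  fd_orb_of_invariant f (c • x) (orb f x)
    (Submodule.smul_mem _ _ (self_mem_orb f x)) (fun _ hy => apply_mem_orb f x hy)

/-- Every tensor lives in `M ⊗ W` for some finite-dimensional `W ≤ N`. -/
lemma exists_fd_right (x : M ⊗[K] N) :
    ∃ W : Submodule K N, FiniteDimensional K W ∧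
      x ∈ LinearMap.range (LinearMap.lTensor M W.subtype) := by
  induction x using TensorProduct.induction_on with
  | zero => exact ⟨⊥, inferInstance, Submodule.zero_mem _⟩
  | tmul a b =>
      refine ⟨K ∙ b, inferInstance, ⟨a ⊗ₜ ⟨b, Submodule.mem_span_singleton_self b⟩, by simp⟩⟩
  | add u v hu hv =>
      obtain ⟨W₁, h₁, y₁, hy₁⟩ := hu
      obtain ⟨W₂, h₂, y₂, hy₂⟩ := hv
      have : FiniteDimensional K ↥(W₁ ⊔ W₂) := Submodule.finiteDimensional_sup _ _
      refine ⟨W₁ ⊔ W₂, this, ?_⟩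
      have key : ∀ (W W' : Submodule K N) (h : W ≤ W') (y : M ⊗[K] W),
          LinearMap.lTensor M W'.subtype
            (LinearMap.lTensor M (Submodule.inclusion h) y) =
          LinearMap.lTensor M W.subtype y := by
        intro W W' h y
        rw [← LinearMap.comp_apply, ← LinearMap.lTensor_comp]
        have : W'.subtype ∘ₗ Submodule.inclusion h = W.subtype := by
          ext z; rfl
        rw [this]
      have m₁ : u ∈ LinearMap.range (LinearMap.lTensor M (W₁ ⊔ W₂).subtype) :=
        ⟨LinearMap.lTensor M (Submodule.inclusion le_sup_left) y₁, by rw [key]; exact hy₁⟩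
      have m₂ : v ∈ LinearMap.range (LinearMap.lTensor M (W₁ ⊔ W₂).subtype) :=
        ⟨LinearMap.lTensor M (Submodule.inclusion le_sup_right) y₂, by rw [key]; exact hy₂⟩
      exact Submodule.add_mem _ m₁ m₂

/-- If all right contractions of `x` land in `A`, then `x ∈ A ⊗ N`. -/
lemma mem_range_rTensor (A : Submodule K M) (x : M ⊗[K] N)
    (h : ∀ φ : N →ₗ[K] K, ctR φ x ∈ A) :
    x ∈ LinearMap.range (LinearMap.rTensor N A.subtype) := by
  obtain ⟨W, hWfd, y, hy⟩ := exists_fd_right (K := K) (M := M) x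
  haveI := hWfd
  set d := Module.finrank K W with hd
  let b : Module.Basis (Fin d) K W := Module.finBasis K W
  let e : (M ⊗[K] W) ≃ₗ[K] (Fin d →₀ M) :=
    (TensorProduct.congr (LinearEquiv.refl K M) b.repr) ≪≫ₗ
      TensorProduct.finsuppScalarRight K K M (Fin d)
  have he_symm : ∀ (j : Fin d) (m : M), e.symm (Finsupp.single j m) = m ⊗ₜ[K] b j := by
    intro j m
    simp only [e, LinearEquiv.trans_symm, LinearEquiv.trans_apply,
      TensorProduct.finsuppScalarRight_symm_apply_single]
    rw [TensorProduct.congr_symm_tmul]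
    simp [Module.Basis.repr_symm_single_one]
  set u : Fin d →₀ M := e y with hu
  have hy' : y = ∑ j ∈ u.support, (u j) ⊗ₜ[K] b j := by
    have : y = e.symm u := by rw [hu, LinearEquiv.symm_apply_apply]
    rw [this]
    conv_lhs => rw [← Finsupp.sum_single u]
    rw [Finsupp.sum, map_sum]
    exact Finset.sum_congr rfl fun j _ => he_symm j (u j)
  have hx : x = ∑ j ∈ u.support, (u j) ⊗ₜ[K] (b j : N) := by
    rw [← hy, hy', map_sum]
    exact Finset.sum_congr rfl fun j _ => by simp
  have hmemA : ∀ j : Fin d, u j ∈ A := by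
    intro j
    obtain ⟨φ, hφ⟩ := LinearMap.exists_extend (b.coord j)
    have hφval : ∀ j' : Fin d, φ ((b j' : W) : N) = if j' = j then 1 else 0 := by
      intro j'
      have : φ ((b j' : W) : N) = b.coord j (b j') := by
        rw [← hφ]; rfl
      rw [this, Module.Basis.coord_apply, Module.Basis.repr_self, Finsupp.single_apply]
    have hc : ctR φ x = ∑ j' ∈ u.support, (if j' = j then (1:K) else 0) • u j' := by
      rw [hx, map_sum]
      exact Finset.sum_congr rfl fun j' _ => by rw [ctR_tmul, hφval]
    have hc2 : ctR φ x = if j ∈ u.support then u j else 0 := by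
      rw [hc, ← Finset.sum_ite_eq' u.support j (fun j' => u j')]
      exact Finset.sum_congr rfl fun j' _ => by split <;> simp
    by_cases hj : j ∈ u.support
    · have := h φ
      rw [hc2, if_pos hj] at this
      exact this
    · rw [Finsupp.notMem_support_iff.mp hj]
      exact Submodule.zero_mem A
  rw [hx]
  refine Submodule.sum_mem _ fun j _ => ⟨(⟨u j, hmemA j⟩ : A) ⊗ₜ[K] (b j : N), by simp⟩

lemma ctL_eq_ctR_comm (ψ : M →ₗ[K] K) (x : M ⊗[K] N) :
    ctL ψ x = ctR ψ (TensorProduct.comm K M N x) := by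
  induction x using TensorProduct.induction_on with
  | zero => simp
  | tmul a b => simp
  | add u v hu hv => simp [map_add, hu, hv]

/-- If all left contractions of `x` land in `B`, then `x ∈ M ⊗ B`. -/
lemma mem_range_lTensor (B : Submodule K N) (x : M ⊗[K] N)
    (h : ∀ ψ : M →ₗ[K] K, ctL ψ x ∈ B) :
    x ∈ LinearMap.range (LinearMap.lTensor M B.subtype) := by
  have h' : ∀ ψ : M →ₗ[K] K, ctR ψ (TensorProduct.comm K M N x) ∈ B := by
    intro ψ; rw [← ctL_eq_ctR_comm]; exact h ψ
  obtain ⟨z, hz⟩ := mem_range_rTensor B (TensorProduct.comm K M N x) h'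
  refine ⟨TensorProduct.comm K (↥B) M z, ?_⟩
  have key : ∀ w : (↥B) ⊗[K] M,
      LinearMap.lTensor M B.subtype (TensorProduct.comm K (↥B) M w) =
        (TensorProduct.comm K M N).symm (LinearMap.rTensor M B.subtype w) := by
    intro w
    induction w using TensorProduct.induction_on with
    | zero => simp
    | tmul a m => simp [TensorProduct.comm_tmul, TensorProduct.comm_symm_tmul]
    | add u v hu hv => simp [map_add, hu, hv]
  rw [key, hz, LinearEquiv.symm_apply_apply]

lemma ctL_rTensor {M' : Type*} [AddCommGroup M'] [Module K M']
    (f : M' →ₗ[K] M) (ψ : M →ₗ[K] K) (y : M' ⊗[K] N) :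
    ctL ψ (LinearMap.rTensor N f y) = ctL (ψ ∘ₗ f) y := by
  induction y using TensorProduct.induction_on with
  | zero => simp
  | tmul a b => simp
  | add u v hu hv => simp [map_add, hu, hv]

/-- Main linear algebra lemma: if all right contractions land in `A` and all
left contractions land in `B`, then `x` is in the span of `a ⊗ b`, `a ∈ A`, `b ∈ B`. -/
lemma mem_span_tmul (A : Submodule K M) (B : Submodule K N) (x : M ⊗[K] N)
    (hA : ∀ φ : N →ₗ[K] K, ctR φ x ∈ A) (hB : ∀ ψ : M →ₗ[K] K, ctL ψ x ∈ B) :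
    x ∈ Submodule.span K {t : M ⊗[K] N | ∃ a ∈ A, ∃ b ∈ B, t = a ⊗ₜ[K] b} := by
  obtain ⟨y, hy⟩ := mem_range_rTensor A x hA
  have hy' : ∀ ψ' : (↥A) →ₗ[K] K, ctL ψ' y ∈ B := by
    intro ψ'
    obtain ⟨ψ, hψ⟩ := LinearMap.exists_extend ψ'
    have : ctL ψ' y = ctL ψ x := by
      rw [← hy, ctL_rTensor, hψ]
    rw [this]
    exact hB ψ
  obtain ⟨z, hz⟩ := mem_range_lTensor B y hy'
  have hxz : x = TensorProduct.map A.subtype B.subtype z := by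
    rw [← hy, ← hz, ← LinearMap.comp_apply, LinearMap.rTensor_comp_lTensor]
  rw [hxz]
  clear hxz hz hy hy' hA hB
  induction z using TensorProduct.induction_on with
  | zero => simp
  | tmul a b =>
      exact Submodule.subset_span ⟨(a : M), a.2, (b : N), b.2, by simp⟩
  | add u v hu hv =>
      rw [map_add]
      exact Submodule.add_mem _ hu hv

/-- Right contractions of a single tensor lie in a fixed f.d. subspace. -/
lemma ctR_bound (x : M ⊗[K] N) :
    ∃ A : Submodule K M, FiniteDimensional K A ∧ ∀ φ : N →ₗ[K] K, ctR φ x ∈ A := by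
  induction x using TensorProduct.induction_on with
  | zero => exact ⟨⊥, inferInstance, fun φ => by simp⟩
  | tmul a b =>
      exact ⟨K ∙ a, inferInstance, fun φ => by
        rw [ctR_tmul]; exact Submodule.smul_mem _ _ (Submodule.mem_span_singleton_self a)⟩
  | add u v hu hv =>
      obtain ⟨A₁, h₁, hm₁⟩ := hu
      obtain ⟨A₂, h₂, hm₂⟩ := hv
      have : FiniteDimensional K ↥(A₁ ⊔ A₂) := Submodule.finiteDimensional_sup _ _
      exact ⟨A₁ ⊔ A₂, this, fun φ => by
        rw [map_add]
        exact Submodule.add_mem_sup (hm₁ φ) (hm₂ φ)⟩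

/-- Right contractions of a f.d. subspace lie in a fixed f.d. subspace. -/
lemma ctR_bound_fd (V : Submodule K (M ⊗[K] N)) [FiniteDimensional K V] :
    ∃ A : Submodule K M, FiniteDimensional K A ∧
      ∀ y ∈ V, ∀ φ : N →ₗ[K] K, ctR φ y ∈ A := by
  let b : Module.Basis (Fin (Module.finrank K V)) K V := Module.finBasis K V
  choose Af hAf hmem using fun j : Fin (Module.finrank K V) => ctR_bound ((b j : M ⊗[K] N))
  have hfd : FiniteDimensional K ↥(⨆ j, Af j) := by
    haveI := hAf
    infer_instance
  refine ⟨⨆ j, Af j, hfd, ?_⟩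
  intro y hy φ
  have hrep : (⟨y, hy⟩ : V) = ∑ j, b.repr ⟨y, hy⟩ j • b j := (b.sum_repr ⟨y, hy⟩).symm
  have : y = ∑ j, b.repr ⟨y, hy⟩ j • (b j : M ⊗[K] N) := by
    have := congrArg (V.subtype) hrep
    simp only [map_sum, map_smul, Submodule.subtype_apply] at this
    exact this
  rw [this, map_sum]
  refine Submodule.sum_mem _ fun j _ => ?_
  rw [map_smul]
  exact Submodule.smul_mem _ _ (Submodule.mem_iSup_of_mem j (hmem j φ))

lemma ctR_bound_fd' (V : Submodule K (M ⊗[K] N)) [FiniteDimensional K V] :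
    ∃ B : Submodule K N, FiniteDimensional K B ∧
      ∀ y ∈ V, ∀ ψ : M →ₗ[K] K, ctL ψ y ∈ B := by
  have : FiniteDimensional K ↥(V.map (TensorProduct.comm K M N : M ⊗[K] N →ₗ[K] N ⊗[K] M)) := by
    apply Module.Finite.map
  obtain ⟨B, hB, hmem⟩ := ctR_bound_fd (V.map (TensorProduct.comm K M N : M ⊗[K] N →ₗ[K] N ⊗[K] M))
  refine ⟨B, hB, ?_⟩
  intro y hy ψ
  have hc : ctL ψ y = ctR ψ (TensorProduct.comm K M N y) := by
    clear hy
    induction y using TensorProduct.induction_on with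
    | zero => simp
    | tmul a b => simp
    | add u v hu hv => simp [map_add, hu, hv]
  rw [hc]
  have := hmem _ (Submodule.mem_map_of_mem (f := (TensorProduct.comm K M N : M ⊗[K] N →ₗ[K] N ⊗[K] M)) hy) ψ
  simpa using this

/-- Commutation identity for right contraction with `D₁ ⊗ 1 + 1 ⊗ D₂`. -/
lemma ctR_comm (D₁ : Module.End K M) (D₂ : Module.End K N) (φ : N →ₗ[K] K)
    (y : M ⊗[K] N) :
    D₁ (ctR φ y)
      = ctR φ ((LinearMap.rTensor N D₁ + LinearMap.lTensor M D₂) y)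
        - ctR (φ ∘ₗ D₂) y := by
  induction y using TensorProduct.induction_on with
  | zero => simp
  | tmul a b => simp [map_smul]; try abel
  | add u v hu hv =>
      simp only [map_add, LinearMap.add_apply] at *
      rw [hu, hv]; abel

lemma ctL_comm (D₁ : Module.End K M) (D₂ : Module.End K N) (ψ : M →ₗ[K] K)
    (y : M ⊗[K] N) :
    D₂ (ctL ψ y)
      = ctL ψ ((LinearMap.rTensor N D₁ + LinearMap.lTensor M D₂) y)
        - ctL (ψ ∘ₗ D₁) y := by
  induction y using TensorProduct.induction_on with
  | zero => simp
  | tmul a b => simp [map_smul]; try abel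
  | add u v hu hv =>
      simp only [map_add, LinearMap.add_apply] at *
      rw [hu, hv]; abel



/-- Pure tensors with locally-finite factors are locally finite for
`D₁ ⊗ 1 + 1 ⊗ D₂`. -/
lemma fd_orb_tmul (D₁ : Module.End K M) (D₂ : Module.End K N) (v : M) (w : N)
    (hv : FiniteDimensional K (orb D₁ v)) (hw : FiniteDimensional K (orb D₂ w)) :
    FiniteDimensional K
      (orb (LinearMap.rTensor N D₁ + LinearMap.lTensor M D₂) (v ⊗ₜ[K] w)) := by
  set V := orb D₁ v with hV
  set W := orb D₂ w with hW
  haveI := hv; haveI := hw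
  set U : Submodule K (M ⊗[K] N) :=
    LinearMap.range (TensorProduct.map V.subtype W.subtype) with hU
  haveI : FiniteDimensional K U := Module.Finite.range _
  have hmem : v ⊗ₜ[K] w ∈ U :=
    ⟨(⟨v, self_mem_orb D₁ v⟩ : V) ⊗ₜ[K] (⟨w, self_mem_orb D₂ w⟩ : W), by simp⟩
  have claim1 : ∀ z : (↥V) ⊗[K] (↥W),
      LinearMap.rTensor N D₁ (TensorProduct.map V.subtype W.subtype z) ∈ U := by
    intro z
    induction z using TensorProduct.induction_on with
    | zero => simp
    | tmul a c =>
        refine ⟨(⟨D₁ (a : M), apply_mem_orb D₁ v a.2⟩ : V) ⊗ₜ[K] c, ?_⟩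
        simp
    | add z₁ z₂ h₁ h₂ =>
        rw [map_add, map_add]
        exact Submodule.add_mem _ h₁ h₂
  have claim2 : ∀ z : (↥V) ⊗[K] (↥W),
      LinearMap.lTensor M D₂ (TensorProduct.map V.subtype W.subtype z) ∈ U := by
    intro z
    induction z using TensorProduct.induction_on with
    | zero => simp
    | tmul a c =>
        refine ⟨a ⊗ₜ[K] (⟨D₂ (c : N), apply_mem_orb D₂ w c.2⟩ : W), ?_⟩
        simp
    | add z₁ z₂ h₁ h₂ =>
        rw [map_add, map_add]
        exact Submodule.add_mem _ h₁ h₂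
  refine fd_orb_of_invariant _ _ U hmem ?_
  rintro u ⟨z, rfl⟩
  rw [LinearMap.add_apply]
  exact Submodule.add_mem _ (claim1 z) (claim2 z)

end Stmt16Aux

open scoped TensorProduct

lemma bracket_one_right {K P : Type*} [CommRing K] [Ring P] [Algebra K P]
    (B : PoissonBracket K P) (x : P) : B.bracket x 1 = 0 := by
  have h := B.leibniz x 1 1
  rw [mul_one, mul_one, one_mul] at h
  exact (left_eq_add.mp h)

lemma bracket_one_left {K P : Type*} [CommRing K] [Ring P] [Algebra K P]
    (B : PoissonBracket K P) (x : P) : B.bracket 1 x = 0 := by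
  rw [B.antisymm, bracket_one_right, neg_zero]

/-- For `Γ = z₁ ⊗ 1 + 1 ⊗ z₂` one has `F(Γ) = F(z₁) ⊗ F(z₂)`. -/
theorem stmt_16 {K P₁ P₂ : Type*} [Field K] [CharZero K] [IsAlgClosed K]
    [Ring P₁] [Algebra K P₁] [Ring P₂] [Algebra K P₂]
    (B₁ : PoissonBracket K P₁) (B₂ : PoissonBracket K P₂)
    (B : PoissonBracket K (P₁ ⊗[K] P₂))
    (hB : ∀ (a₁ b₁ : P₁) (a₂ b₂ : P₂),
      B.bracket (a₁ ⊗ₜ[K] a₂) (b₁ ⊗ₜ[K] b₂)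
        = (b₁ * a₁) ⊗ₜ[K] B₂.bracket a₂ b₂ + B₁.bracket a₁ b₁ ⊗ₜ[K] (a₂ * b₂))
    (u₁ : DegreeMap K P₁ B₁) (u₂ : DegreeMap K P₂ B₂)
    (z₁ : P₁) (z₂ : P₂) :
    {T : P₁ ⊗[K] P₂ | FiniteDimensional K
        ↥(Submodule.span K (Set.range fun n : ℕ =>
          (B.bracket (z₁ ⊗ₜ[K] 1 + 1 ⊗ₜ[K] z₂) ^ n) T))}
      = ↑(Submodule.span K {T : P₁ ⊗[K] P₂ | ∃ (v : P₁) (w : P₂),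
          FiniteDimensional K
            ↥(Submodule.span K (Set.range fun n : ℕ => (B₁.bracket z₁ ^ n) v)) ∧
          FiniteDimensional K
            ↥(Submodule.span K (Set.range fun n : ℕ => (B₂.bracket z₂ ^ n) w)) ∧
          T = v ⊗ₜ[K] w}) := by
  classical
  set D₁ : Module.End K P₁ := B₁.bracket z₁ with hD₁
  set D₂ : Module.End K P₂ := B₂.bracket z₂ with hD₂
  set Nop : Module.End K (P₁ ⊗[K] P₂) :=
    LinearMap.rTensor P₂ D₁ + LinearMap.lTensor P₁ D₂ with hNop
  have hD : B.bracket (z₁ ⊗ₜ[K] (1 : P₂) + (1 : P₁) ⊗ₜ[K] z₂) = Nop := by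
    rw [map_add]
    apply TensorProduct.ext'
    intro a b
    rw [LinearMap.add_apply, hB z₁ a 1 b, hB 1 a z₂ b]
    simp [hNop, hD₁, hD₂, bracket_one_left, bracket_one_right, mul_one, one_mul]
  ext T
  simp only [Set.mem_setOf_eq, SetLike.mem_coe]
  constructor
  · intro hT
    rw [hD] at hT
    have hTfd : FiniteDimensional K (Stmt16Aux.orb Nop T) := hT
    set V := Stmt16Aux.orb Nop T with hVdef
    haveI : FiniteDimensional K V := hTfd
    obtain ⟨A₀, hA₀fd, hA₀⟩ := Stmt16Aux.ctR_bound_fd V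
    obtain ⟨B₀, hB₀fd, hB₀⟩ := Stmt16Aux.ctR_bound_fd' V
    set Ag : Set P₁ := {a | ∃ y ∈ V, ∃ φ : P₂ →ₗ[K] K, a = Stmt16Aux.ctR φ y} with hAg
    set A : Submodule K P₁ := Submodule.span K Ag with hA
    set Bg : Set P₂ := {b | ∃ y ∈ V, ∃ ψ : P₁ →ₗ[K] K, b = Stmt16Aux.ctL ψ y} with hBg
    set Bs : Submodule K P₂ := Submodule.span K Bg with hBs
    haveI hAfd : FiniteDimensional K A := by
      haveI := hA₀fd
      refine Submodule.finiteDimensional_of_le (S₂ := A₀) (Submodule.span_le.mpr ?_)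
      rintro a ⟨y, hy, φ, rfl⟩
      exact hA₀ y hy φ
    haveI hBfd : FiniteDimensional K Bs := by
      haveI := hB₀fd
      refine Submodule.finiteDimensional_of_le (S₂ := B₀) (Submodule.span_le.mpr ?_)
      rintro b ⟨y, hy, ψ, rfl⟩
      exact hB₀ y hy ψ
    have hAinv : ∀ a ∈ A, D₁ a ∈ A := by
      intro a ha
      induction ha using Submodule.span_induction with
      | mem a ha =>
          obtain ⟨y, hy, φ, rfl⟩ := ha
          rw [Stmt16Aux.ctR_comm D₁ D₂ φ y]
          refine sub_mem ?_ ?_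
          · exact Submodule.subset_span
              ⟨Nop y, Stmt16Aux.apply_mem_orb Nop T hy, φ, rfl⟩
          · exact Submodule.subset_span ⟨y, hy, φ ∘ₗ D₂, rfl⟩
      | zero => simp
      | add u v _ _ hu hv => rw [map_add]; exact add_mem hu hv
      | smul c u _ hu => rw [map_smul]; exact Submodule.smul_mem _ _ hu
    have hBinv : ∀ b ∈ Bs, D₂ b ∈ Bs := by
      intro b hb
      induction hb using Submodule.span_induction with
      | mem b hb =>
          obtain ⟨y, hy, ψ, rfl⟩ := hb
          rw [Stmt16Aux.ctL_comm D₁ D₂ ψ y]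
          refine sub_mem ?_ ?_
          · exact Submodule.subset_span
              ⟨Nop y, Stmt16Aux.apply_mem_orb Nop T hy, ψ, rfl⟩
          · exact Submodule.subset_span ⟨y, hy, ψ ∘ₗ D₁, rfl⟩
      | zero => simp
      | add u v _ _ hu hv => rw [map_add]; exact add_mem hu hv
      | smul c u _ hu => rw [map_smul]; exact Submodule.smul_mem _ _ hu
    have hTA : ∀ φ : P₂ →ₗ[K] K, Stmt16Aux.ctR φ T ∈ A := fun φ =>
      Submodule.subset_span ⟨T, Stmt16Aux.self_mem_orb Nop T, φ, rfl⟩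
    have hTB : ∀ ψ : P₁ →ₗ[K] K, Stmt16Aux.ctL ψ T ∈ Bs := fun ψ =>
      Submodule.subset_span ⟨T, Stmt16Aux.self_mem_orb Nop T, ψ, rfl⟩
    have hmem := Stmt16Aux.mem_span_tmul A Bs T hTA hTB
    refine Submodule.span_le.mpr ?_ hmem
    rintro t ⟨a, ha, b, hb, rfl⟩
    refine Submodule.subset_span ⟨a, b, ?_, ?_, rfl⟩
    · exact Stmt16Aux.fd_orb_of_invariant D₁ a A ha hAinv
    · exact Stmt16Aux.fd_orb_of_invariant D₂ b Bs hb hBinv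
  · intro hT
    rw [hD]
    show FiniteDimensional K (Stmt16Aux.orb Nop T)
    induction hT using Submodule.span_induction with
    | mem t ht =>
        obtain ⟨v, w, hv, hw, rfl⟩ := ht
        exact Stmt16Aux.fd_orb_tmul D₁ D₂ v w hv hw
    | zero => exact Stmt16Aux.fd_orb_zero Nop
    | add u v _ _ hu hv => exact Stmt16Aux.fd_orb_add Nop hu hv
    | smul c u _ hu => exact Stmt16Aux.fd_orb_smul Nop c hu
end
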